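/- arXiv:1812.04880 — 2 statements merged into one kernel-verified Lean document; each statement's English description precedes it below -/
import Mathlib

section
/- For z ∈ Ĩ_n with involution code ĉ(z) = (c_1, ..., c_n): the involution length satisfies ℓ̂(z) = c_1 + c_2 + ... + c_n, and an integer i is a visible descent of z if and only if c_i > c_{i+1} (indices modulo n). -/
open scoped TensorProduct

/-- Membership in the affine symmetric group `S̃_n`, viewed inside `Equiv.Perm ℤ`. -/
def IsAffine (n : ℕ) (π : Equiv.Perm ℤ) : Prop :=
  (∀ i : ℤ, π (i + n) = π i + n) ∧
  (∑ i ∈ Finset.Icc (1 : ℤ) (n : ℤ), π i) = ∑ i ∈ Finset.Icc (1 : ℤ) (n : ℤ), i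

/-- The underlying function of the affine reflection `t_{ij}`. -/
def affTFun (n : ℕ) (i j k : ℤ) : ℤ :=
  if (k - i) % (n : ℤ) = 0 then k - i + j
  else if (k - j) % (n : ℤ) = 0 then k - j + i
  else k

theorem affTFun_involutive {n : ℕ} {i j : ℤ} (h : ¬ (j - i) % (n : ℤ) = 0) :
    Function.Involutive (affTFun n i j) := by
  have key : ∀ a : ℤ, a % (n : ℤ) = 0 ↔ (n : ℤ) ∣ a :=
    fun a => (@Int.dvd_iff_emod_eq_zero (n : ℤ) a).symm
  rw [key] at h
  intro k
  by_cases h1 : (n : ℤ) ∣ (k - i)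
  · have h2 : ¬ (n : ℤ) ∣ (k - i + j - i) := by
      intro hd
      apply h
      have h5 : j - i = (k - i + j - i) - (k - i) := by ring
      rw [h5]
      exact dvd_sub hd h1
    have h3 : (n : ℤ) ∣ (k - i + j - j) := by
      have h5 : k - i + j - j = k - i := by ring
      rw [h5]; exact h1
    have e1 : affTFun n i j k = k - i + j := by simp [affTFun, key, h1]
    have e2 : affTFun n i j (k - i + j) = k := by
      simp only [affTFun, key]
      rw [if_neg h2, if_pos h3]
      ring
    rw [e1, e2]
  · by_cases h2 : (n : ℤ) ∣ (k - j)
    · have h3 : (n : ℤ) ∣ (k - j + i - i) := by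
        have h5 : k - j + i - i = k - j := by ring
        rw [h5]; exact h2
      have e1 : affTFun n i j k = k - j + i := by simp [affTFun, key, h1, h2]
      have e2 : affTFun n i j (k - j + i) = k := by
        simp only [affTFun, key]
        rw [if_pos h3]
        ring
      rw [e1, e2]
    · have e1 : affTFun n i j k = k := by simp [affTFun, key, h1, h2]
      rw [e1, e1]

/-- The affine reflection `t_{ij}` (interpreted as the identity when `i ≡ j (mod n)`). -/
noncomputable def affT (n : ℕ) (i j : ℤ) : Equiv.Perm ℤ :=
  if h : (j - i) % (n : ℤ) = 0 then 1
  else Function.Involutive.toPerm _ (affTFun_involutive h)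

/-- The simple reflection `s_i = t_{i,i+1}` of `S̃_n`. -/
noncomputable def affS (n : ℕ) (i : ℤ) : Equiv.Perm ℤ := affT n i (i + 1)

/-- Coxeter length: minimal length of a word in the simple reflections `s_1, …, s_n`. -/
noncomputable def wordLength (n : ℕ) (π : Equiv.Perm ℤ) : ℕ :=
  sInf {l : ℕ | ∃ w : List ℤ,
    (∀ x ∈ w, 1 ≤ x ∧ x ≤ (n : ℤ)) ∧ (w.map (affS n)).prod = π ∧ w.length = l}

/-- The set of inversions of `π`, up to the diagonal translation relation. -/
def InvPair (π : Equiv.Perm ℤ) : Type :=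
  {p : ℤ × ℤ // p.1 < p.2 ∧ π p.2 < π p.1}

/-- The number of equivalence classes of inversions of `π` under
`(a,b) ~ (a + mn, b + mn)`. -/
noncomputable def invLength (n : ℕ) (π : Equiv.Perm ℤ) : ℕ :=
  Nat.card (Quot fun p q : InvPair π =>
    ∃ m : ℤ, q.1.1 = p.1.1 + m * n ∧ q.1.2 = p.1.2 + m * n)

/-- Entry `c_i` of the code of an affine permutation. -/
noncomputable def codeEntry (π : Equiv.Perm ℤ) (i : ℤ) : ℕ :=
  Nat.card {j : ℤ // i < j ∧ π j < π i}

/-- Entry `ĉ_i` of the involution code of an affine involution. -/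
noncomputable def icodeEntry (z : Equiv.Perm ℤ) (i : ℤ) : ℕ :=
  Nat.card {j : ℤ // i < j ∧ z j < z i ∧ z j ≤ i}

/-- `ℓ'(z)`: `n` minus the number of orbits of `z` acting on `ℤ/nℤ`. -/
noncomputable def lprime (n : ℕ) (z : Equiv.Perm ℤ) : ℕ :=
  n - Nat.card (Quot fun a b : ZMod n => ((z (a.val : ℤ) : ℤ) : ZMod n) = b)

/-- The characterizing properties of the Demazure (0-Hecke) product on `S̃_n`:
closure, associativity, `s_i ∘ s_i = s_i`, and agreement with the group product
on length-additive factorizations. -/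
def IsDemazure (n : ℕ) (D : Equiv.Perm ℤ → Equiv.Perm ℤ → Equiv.Perm ℤ) : Prop :=
  (∀ a b, IsAffine n a → IsAffine n b → IsAffine n (D a b)) ∧
  (∀ a b c, IsAffine n a → IsAffine n b → IsAffine n c →
    D (D a b) c = D a (D b c)) ∧
  (∀ i : ℤ, D (affS n i) (affS n i) = affS n i) ∧
  (∀ a b, IsAffine n a → IsAffine n b →
    wordLength n (a * b) = wordLength n a + wordLength n b → D a b = a * b)

/-- The set of Hecke atoms `{π : π⁻¹ ∘ π = z}`. -/
def AHecke (n : ℕ) (D : Equiv.Perm ℤ → Equiv.Perm ℤ → Equiv.Perm ℤ)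
    (z : Equiv.Perm ℤ) : Set (Equiv.Perm ℤ) :=
  {π | IsAffine n π ∧ D π⁻¹ π = z}

/-- The set of atoms: minimal-length Hecke atoms. -/
def DemAtoms (n : ℕ) (D : Equiv.Perm ℤ → Equiv.Perm ℤ → Equiv.Perm ℤ)
    (z : Equiv.Perm ℤ) : Set (Equiv.Perm ℤ) :=
  {π | π ∈ AHecke n D z ∧ ∀ σ ∈ AHecke n D z, wordLength n π ≤ wordLength n σ}

/-- The Bruhat covering relation on `S̃_n`. -/
def BruhatCov (n : ℕ) (a b : Equiv.Perm ℤ) : Prop :=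
  (∃ i j : ℤ, i < j ∧ (j - i) % (n : ℤ) ≠ 0 ∧ b = a * affT n i j) ∧
  wordLength n b = wordLength n a + 1

/-- The Bruhat order on `S̃_n`. -/
def BruhatLE (n : ℕ) : Equiv.Perm ℤ → Equiv.Perm ℤ → Prop :=
  Relation.ReflTransGen (BruhatCov n)

/-- The covering relation of the Bruhat order restricted to involutions in `S̃_n`. -/
def BruhatCovI (n : ℕ) (y z : Equiv.Perm ℤ) : Prop :=
  IsAffine n y ∧ IsAffine n z ∧ y⁻¹ = y ∧ z⁻¹ = z ∧
  BruhatLE n y z ∧ y ≠ z ∧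
  ∀ w : Equiv.Perm ℤ, IsAffine n w → w⁻¹ = w →
    BruhatLE n y w → BruhatLE n w z → w = y ∨ w = z

/-- Strict dominance order on partitions (written as weakly decreasing functions). -/
def DomLT (p q : ℕ → ℕ) : Prop :=
  p ≠ q ∧ ∀ k : ℕ, ∑ i ∈ Finset.range k, p i ≤ ∑ i ∈ Finset.range k, q i

/-- The shape `λ(π)`: the transpose of the partition sorting the code of `π⁻¹`,
recorded as the weakly decreasing function `k ↦ λ(π)_{k+1}`. -/
noncomputable def affShape (n : ℕ) (π : Equiv.Perm ℤ) : ℕ → ℕ :=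
  fun k => Multiset.countP (fun x => k < x)
    ((Finset.Icc (1 : ℤ) (n : ℤ)).val.map (codeEntry π⁻¹))

/-- The shape `μ(z)`: the transpose of the partition sorting the involution code of `z`,
recorded as the weakly decreasing function `k ↦ μ(z)_{k+1}`. -/
noncomputable def invShape (n : ℕ) (z : Equiv.Perm ℤ) : ℕ → ℕ :=
  fun k => Multiset.countP (fun x => k < x)
    ((Finset.Icc (1 : ℤ) (n : ℤ)).val.map (icodeEntry z))

/-- The weakly decreasing rearrangement of a multiset of naturals, padded by zeros. -/
noncomputable def rearr (s : Multiset ℕ) : ℕ → ℕ :=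
  fun k => ((s.sort (· ≤ ·)).reverse).getD k 0

/-- Remove the entries of a list of integers that repeat an earlier residue mod `n`. -/
def dedupMod (n : ℕ) : List ℤ → List ℤ
  | [] => []
  | x :: xs => x :: dedupMod n (xs.filter fun y => (y - x) % (n : ℤ) ≠ 0)
termination_by l => l.length
decreasing_by
  simp only [List.length_cons, List.length_unattach]
  exact Nat.lt_succ_of_le ((List.length_filter_le _ _).trans (by simp))

/-- The window `[[z(a₁), a₁, z(a₂), a₂, …]]` of `α_min(z)⁻¹`, where `a₁ < a₂ < ⋯`
are the elements `a ∈ [n]` with `a ≤ z(a)`. -/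
noncomputable def aminWindow (n : ℕ) (z : Equiv.Perm ℤ) : List ℤ :=
  dedupMod n
    ((((Finset.Icc (1 : ℤ) (n : ℤ)).sort (· ≤ ·)).filter fun a => a ≤ z a).flatMap
      fun a => [z a, a])

/-- Cyclically decreasing elements of `S̃_n`. -/
def IsCycDec (n : ℕ) (π : Equiv.Perm ℤ) : Prop :=
  ∃ w : List ℤ,
    (∀ x ∈ w, 1 ≤ x ∧ x ≤ (n : ℤ)) ∧ (w.map (affS n)).prod = π ∧
    w.length = wordLength n π ∧
    w.Pairwise fun a b => (a + 1 - b) % (n : ℤ) ≠ 0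

/-- The coefficient of the monomial `∏ₖ xₖ₊₁^(α k)` in Lam's affine Stanley symmetric
function `F_π`: the number of length-additive factorizations of `π` into cyclically
decreasing factors of lengths prescribed by `α`. -/
noncomputable def stanleyCoeff (n : ℕ) (π : Equiv.Perm ℤ) (α : ℕ →₀ ℕ) : ℕ :=
  Nat.card {f : ℕ → Equiv.Perm ℤ //
    (∀ k, IsCycDec n (f k)) ∧ (∀ k, wordLength n (f k) = α k) ∧
    (∑ k ∈ α.support, α k) = wordLength n π ∧
    ∃ N : ℕ, (∀ k, N ≤ k → f k = 1) ∧ ((List.range N).map f).prod = π}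

/-- The set `Φ⁻_r(y)` of Bruhat covers of `y` of the form `τⁿ_{i r}(y)` with `i < r`
and `i ∉ {r, y(r)} + nℤ`. -/
def PhiMinus (n : ℕ) (τ : ℤ → ℤ → Equiv.Perm ℤ → Equiv.Perm ℤ)
    (y : Equiv.Perm ℤ) (r : ℤ) : Set (Equiv.Perm ℤ) :=
  {z | BruhatCovI n y z ∧ ∃ i : ℤ, i < r ∧ (i - r) % (n : ℤ) ≠ 0 ∧
    (i - y r) % (n : ℤ) ≠ 0 ∧ z = τ i r y}

/-- The set `Φ⁺_r(y)` of Bruhat covers of `y` of the form `τⁿ_{r j}(y)` with `r < j`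
and `j ∉ {r, y(r)} + nℤ`. -/
def PhiPlus (n : ℕ) (τ : ℤ → ℤ → Equiv.Perm ℤ → Equiv.Perm ℤ)
    (y : Equiv.Perm ℤ) (r : ℤ) : Set (Equiv.Perm ℤ) :=
  {z | BruhatCovI n y z ∧ ∃ j : ℤ, r < j ∧ (j - r) % (n : ℤ) ≠ 0 ∧
    (j - y r) % (n : ℤ) ≠ 0 ∧ z = τ r j y}

/-- The affine symmetric group as a subtype of `Equiv.Perm ℤ`. -/
abbrev AffPerm (n : ℕ) := {π : Equiv.Perm ℤ // IsAffine n π}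

/-- The coproduct `Δ(π) = Σ_{π ≐ π'π''} π' ⊗ π''` on `ℚ S̃_n`. -/
noncomputable def affComul (n : ℕ) :
    (AffPerm n →₀ ℚ) →ₗ[ℚ] TensorProduct ℚ (AffPerm n →₀ ℚ) (AffPerm n →₀ ℚ) :=
  Finsupp.lift _ ℚ _ fun π : AffPerm n =>
    ∑ᶠ p ∈ {p : AffPerm n × AffPerm n |
        p.1.val * p.2.val = π.val ∧
        wordLength n π.val = wordLength n p.1.val + wordLength n p.2.val},
      (Finsupp.single p.1 (1 : ℚ)) ⊗ₜ[ℚ] (Finsupp.single p.2 (1 : ℚ))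

/-!
Everything is counted on the pairs `(a, b)` with `a ∈ [1, n]`, a fundamental domain for the
diagonal translation by `n`. For an affine permutation `π`, the inversions `a < b`, `π b < π a`
in this domain number `∑ cᵢ`, and this is the Coxeter length: right multiplication by `sᵣ`
changes the count by exactly one, and every `π ≠ 1` has a descent in `[1, n]`. The number
`ℓ'(z)` counts the `a ∈ [1, n]` with `a < z a`, one for each two-element orbit on `ℤ/nℤ`.
Call an inversion of `z` marked when `z b ≤ a`, so that `ĉᵢ` counts the marked inversions with
`a = i`. The involution `(a, b) ↦ (z b, z a)` exchanges the unmarked inversions with the marked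
ones off the graph of `z`, and fixes the pairs `(a, z a)` with `a < z a`; hence
`ℓ(z) + ℓ'(z) = 2 ∑ ĉᵢ`. Finally, the row counted by `ĉ_{i+1}` lies in the row of `ĉᵢ` minus
`i + 1` when `i` is a visible descent, and contains it otherwise.
-/

section WindowArithmetic

variable {n : ℕ}

def toWindow (n : ℕ) (i : ℤ) : ℤ := (i - 1) % (n : ℤ) + 1

theorem toWindow_mem (hn : 0 < n) (i : ℤ) : toWindow n i ∈ Finset.Icc (1 : ℤ) n := by
  have := Int.emod_nonneg (i - 1) (Int.natCast_ne_zero.mpr hn.ne')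
  have := Int.emod_lt_of_pos (i - 1) (Int.natCast_pos.mpr hn)
  simp only [toWindow, Finset.mem_Icc]
  omega

theorem dvd_toWindow_sub (n : ℕ) (i : ℤ) : (n : ℤ) ∣ toWindow n i - i := by
  rw [toWindow, Int.emod_def]
  exact ⟨-((i - 1) / n), by ring⟩

theorem toWindow_add_of_dvd {c : ℤ} (hc : (n : ℤ) ∣ c) (i : ℤ) :
    toWindow n (i + c) = toWindow n i := by
  obtain ⟨k, rfl⟩ := hc
  rw [toWindow, toWindow, add_sub_right_comm, Int.add_mul_emod_self_left]

theorem toWindow_periodic (n : ℕ) : Function.Periodic (toWindow n) n :=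
  toWindow_add_of_dvd dvd_rfl

theorem toWindow_of_mem {i : ℤ} (hi : i ∈ Finset.Icc (1 : ℤ) n) : toWindow n i = i := by
  rw [Finset.mem_Icc] at hi
  rw [toWindow, Int.emod_eq_of_lt (by omega) (by omega)]
  omega

theorem eq_of_mem_window_of_dvd {i j : ℤ} (hi : i ∈ Finset.Icc (1 : ℤ) n)
    (hj : j ∈ Finset.Icc (1 : ℤ) n) (h : (n : ℤ) ∣ j - i) : i = j := by
  rw [← toWindow_of_mem hi, ← toWindow_of_mem hj, ← toWindow_add_of_dvd h i, add_sub_cancel]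

end WindowArithmetic

abbrev shiftCentralizer (n : ℕ) : Subgroup (Equiv.Perm ℤ) :=
  Subgroup.centralizer {Equiv.addRight (n : ℤ)}

namespace shiftCentralizer

variable {n : ℕ} {π : Equiv.Perm ℤ}

theorem mem_iff : π ∈ shiftCentralizer n ↔ ∀ i, π (i + n) = π i + n := by
  simp [Subgroup.mem_centralizer_singleton_iff, Equiv.ext_iff]

theorem apply_add_of_dvd (hπ : π ∈ shiftCentralizer n) {c : ℤ} (hc : (n : ℤ) ∣ c) (i : ℤ) :
    π (i + c) = π i + c := by
  obtain ⟨k, rfl⟩ := hc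
  have h : Commute π (Equiv.addRight (n : ℤ)) := Subgroup.mem_centralizer_singleton_iff.mp hπ
  simpa [mul_comm] using congrArg (fun σ : Equiv.Perm ℤ => σ i) (h.zpow_right k).eq

theorem periodic_apply_sub (hπ : π ∈ shiftCentralizer n) :
    Function.Periodic (fun i => π i - i) n := fun i => by
  simp only [mem_iff.mp hπ]
  ring

end shiftCentralizer

section AffinePermutations

variable {n : ℕ} {π σ : Equiv.Perm ℤ}

theorem toWindow_apply_toWindow (hσ : σ ∈ shiftCentralizer n) (x : ℤ) :
    toWindow n (σ (toWindow n x)) = toWindow n (σ x) := by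
  rw [← add_sub_cancel x (toWindow n x), shiftCentralizer.apply_add_of_dvd hσ
    (dvd_toWindow_sub n x), toWindow_add_of_dvd (dvd_toWindow_sub n x)]

theorem Function.Periodic.apply_toWindow {M : Type*} {f : ℤ → M} (hf : Function.Periodic f n)
    (x : ℤ) : f (toWindow n x) = f x := by
  obtain ⟨k, hk⟩ := dvd_toWindow_sub n x
  rw [show toWindow n x = x + k * n by linarith]
  exact hf.int_mul k x

theorem sum_window_comp {M : Type*} [AddCommMonoid M] (hn : 0 < n) {f : ℤ → M}
    (hf : Function.Periodic f n) (hσ : σ ∈ shiftCentralizer n) :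
    ∑ i ∈ Finset.Icc (1 : ℤ) n, f (σ i) = ∑ i ∈ Finset.Icc (1 : ℤ) n, f i := by
  have hσ' := inv_mem hσ
  refine Finset.sum_nbij' (fun i => toWindow n (σ i)) (fun j => toWindow n (σ⁻¹ j))
    (fun _ _ => toWindow_mem hn _) (fun _ _ => toWindow_mem hn _) (fun i hi => ?_)
    (fun j hj => ?_) (fun i _ => (hf.apply_toWindow _).symm)
  · rw [toWindow_apply_toWindow hσ']
    simpa using toWindow_of_mem hi
  · rw [toWindow_apply_toWindow hσ]
    simpa using toWindow_of_mem hj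

theorem IsAffine.mem_shiftCentralizer (hπ : IsAffine n π) : π ∈ shiftCentralizer n :=
  shiftCentralizer.mem_iff.mpr hπ.1

theorem IsAffine.mul (hn : 0 < n) (hπ : IsAffine n π) (hσ : IsAffine n σ) :
    IsAffine n (π * σ) := by
  refine ⟨shiftCentralizer.mem_iff.mp (mul_mem hπ.mem_shiftCentralizer hσ.mem_shiftCentralizer),
    ?_⟩
  calc ∑ i ∈ Finset.Icc (1 : ℤ) n, π (σ i)
      = ∑ i ∈ Finset.Icc (1 : ℤ) n, (π (σ i) - σ i) + ∑ i ∈ Finset.Icc (1 : ℤ) n, σ i := by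
        rw [← Finset.sum_add_distrib]; simp
    _ = ∑ i ∈ Finset.Icc (1 : ℤ) n, (π i - i) + ∑ i ∈ Finset.Icc (1 : ℤ) n, i := by
        rw [sum_window_comp hn (shiftCentralizer.periodic_apply_sub hπ.mem_shiftCentralizer)
          hσ.mem_shiftCentralizer, hσ.2]
    _ = ∑ i ∈ Finset.Icc (1 : ℤ) n, i := by
        rw [Finset.sum_sub_distrib, hπ.2, sub_self, zero_add]

end AffinePermutations

section SimpleReflections

variable {n : ℕ}

theorem affT_mem_shiftCentralizer (n : ℕ) (i j : ℤ) : affT n i j ∈ shiftCentralizer n := by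
  unfold affT
  split_ifs with h
  · exact one_mem _
  · refine shiftCentralizer.mem_iff.mpr fun k => ?_
    have e : ∀ a : ℤ, (k + n - a) % (n : ℤ) = (k - a) % n := fun a => by
      rw [add_sub_right_comm, Int.add_emod_right]
    simp only [Function.Involutive.coe_toPerm, affTFun, e]
    split_ifs <;> ring

theorem affS_mem_shiftCentralizer (n : ℕ) (r : ℤ) : affS n r ∈ shiftCentralizer n :=
  affT_mem_shiftCentralizer n r (r + 1)

theorem affT_mul_self (n : ℕ) (i j : ℤ) : affT n i j * affT n i j = 1 := by
  unfold affT
  split_ifs with h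
  · exact one_mul 1
  · ext k
    exact affTFun_involutive h k

theorem affS_mul_self (n : ℕ) (r : ℤ) : affS n r * affS n r = 1 := affT_mul_self n r (r + 1)

theorem affS_affS (n : ℕ) (r k : ℤ) : affS n r (affS n r k) = k :=
  congrArg (fun σ : Equiv.Perm ℤ => σ k) (affS_mul_self n r)

theorem affS_one (r : ℤ) : affS 1 r = 1 := by
  simp [affS, affT]

theorem affS_apply (hn2 : 2 ≤ n) (r k : ℤ) :
    affS n r k = if (n : ℤ) ∣ k - r then k + 1 else if (n : ℤ) ∣ k - (r + 1) then k - 1 else k := by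
  have h1 : ¬ (r + 1 - r) % (n : ℤ) = 0 := by
    rw [add_sub_cancel_left, Int.emod_eq_of_lt (by omega) (by omega)]
    omega
  simp only [affS, affT, dif_neg h1, Function.Involutive.coe_toPerm, affTFun,
    Int.dvd_iff_emod_eq_zero]
  split_ifs <;> ring

theorem not_dvd_sub_and_dvd_sub_add_one (hn2 : 2 ≤ n) (r k : ℤ) :
    ¬ ((n : ℤ) ∣ k - r ∧ (n : ℤ) ∣ k - (r + 1)) := fun ⟨h, h'⟩ => by
  have := Int.le_of_dvd one_pos (by simpa using dvd_sub h h')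
  omega

theorem affS_apply_of_dvd (hn2 : 2 ≤ n) {r k : ℤ} (h : (n : ℤ) ∣ k - r) :
    affS n r k = k + 1 := by
  simp [affS_apply hn2, h]

theorem affS_apply_add_one_of_dvd (hn2 : 2 ≤ n) {r k : ℤ} (h : (n : ℤ) ∣ k - r) :
    affS n r (k + 1) = k := by
  have := not_dvd_sub_and_dvd_sub_add_one hn2 r (k + 1)
  simp_all [affS_apply hn2]

theorem affS_apply_self (hn2 : 2 ≤ n) (r : ℤ) : affS n r r = r + 1 :=
  affS_apply_of_dvd hn2 (by simp)

theorem affS_apply_add_one (hn2 : 2 ≤ n) (r : ℤ) : affS n r (r + 1) = r :=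
  affS_apply_add_one_of_dvd hn2 (by simp)

theorem affS_apply_cases (hn2 : 2 ≤ n) (r k : ℤ) :
    ((n : ℤ) ∣ k - r ∧ affS n r k = k + 1) ∨ affS n r k = k - 1 ∨ affS n r k = k := by
  rw [affS_apply hn2]
  split_ifs with h <;> simp [h]

theorem affS_lt_affS (hn2 : 2 ≤ n) (r : ℤ) {a b : ℤ} (hab : a < b)
    (hnot : ¬ ((n : ℤ) ∣ a - r ∧ b = a + 1)) : affS n r a < affS n r b := by
  by_contra hge
  have hne : affS n r a ≠ affS n r b := (affS n r).injective.ne hab.ne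
  apply hnot
  rcases affS_apply_cases hn2 r a with ⟨hd, ha⟩ | ha | ha
  · rcases affS_apply_cases hn2 r b with ⟨-, hb⟩ | hb | hb <;> exact ⟨hd, by omega⟩
  all_goals rcases affS_apply_cases hn2 r b with ⟨-, hb⟩ | hb | hb <;> omega

theorem isAffine_affS (hn2 : 2 ≤ n) (r : ℤ) : IsAffine n (affS n r) := by
  let g : ℤ → ℤ := fun i => if (n : ℤ) ∣ i - (r + 1) then 1 else 0
  have hg : Function.Periodic g n := fun i => by simp only [g, add_sub_right_comm, dvd_add_self_right]
  have h1 : Equiv.addRight (1 : ℤ) ∈ shiftCentralizer n :=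
    shiftCentralizer.mem_iff.mpr fun i => by simp only [Equiv.coe_addRight]; ring
  have hs : ∀ i, affS n r i = i + (g (i + 1) - g i) := fun i => by
    have := not_dvd_sub_and_dvd_sub_add_one hn2 r i
    simp only [affS_apply hn2, g, add_sub_add_right_eq_sub]
    split_ifs <;> simp_all [sub_eq_add_neg]
  refine ⟨shiftCentralizer.mem_iff.mp (affS_mem_shiftCentralizer n r), ?_⟩
  have hshift := sum_window_comp (by omega) hg h1
  simp only [Equiv.coe_addRight] at hshift
  rw [Finset.sum_congr rfl fun i _ => hs i, Finset.sum_add_distrib, Finset.sum_sub_distrib,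
    hshift, sub_self, add_zero]

end SimpleReflections

section WindowPairs

variable {n : ℕ}

def windowPairs (n : ℕ) : Set (ℤ × ℤ) := {p | p.1 ∈ Finset.Icc (1 : ℤ) n}

def toWindowPair (n : ℕ) (p : ℤ × ℤ) : ℤ × ℤ :=
  (p.1 + (toWindow n p.1 - p.1), p.2 + (toWindow n p.1 - p.1))

def DiagInvariant (n : ℕ) (A : Set (ℤ × ℤ)) : Prop :=
  ∀ p ∈ A, ∀ c : ℤ, (n : ℤ) ∣ c → (p.1 + c, p.2 + c) ∈ A

theorem DiagInvariant.inter {A B : Set (ℤ × ℤ)} (hA : DiagInvariant n A)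
    (hB : DiagInvariant n B) : DiagInvariant n (A ∩ B) :=
  fun p hp c hc => ⟨hA p hp.1 c hc, hB p hp.2 c hc⟩

theorem DiagInvariant.diff {A B : Set (ℤ × ℤ)} (hA : DiagInvariant n A)
    (hB : DiagInvariant n B) : DiagInvariant n (A \ B) := fun p hp c hc =>
  ⟨hA p hp.1 c hc, fun h => hp.2 (by simpa using hB _ h (-c) (dvd_neg.mpr hc))⟩

theorem toWindowPair_mem (hn : 0 < n) (p : ℤ × ℤ) : toWindowPair n p ∈ windowPairs n := by
  simpa [windowPairs, toWindowPair] using toWindow_mem hn p.1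

theorem toWindowPair_add_of_dvd {c : ℤ} (hc : (n : ℤ) ∣ c) (p : ℤ × ℤ) :
    toWindowPair n (p.1 + c, p.2 + c) = toWindowPair n p := by
  simp only [toWindowPair, toWindow_add_of_dvd hc, Prod.mk.injEq]
  constructor <;> ring

theorem toWindowPair_of_mem {p : ℤ × ℤ} (hp : p ∈ windowPairs n) : toWindowPair n p = p := by
  simp [toWindowPair, toWindow_of_mem hp]

theorem DiagInvariant.toWindowPair_mem {A : Set (ℤ × ℤ)} (hA : DiagInvariant n A)
    {p : ℤ × ℤ} (hp : p ∈ A) : toWindowPair n p ∈ A :=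
  hA p hp _ (dvd_toWindow_sub n p.1)

/-- `windowPairs n` is a fundamental domain for diagonal translation by `n`, so a translation
equivariant involution exchanging `A` and `B` induces a bijection between their windowed parts. -/
theorem ncard_windowPairs_inter_eq (hn : 0 < n) {A B : Set (ℤ × ℤ)} (hA : DiagInvariant n A)
    (hB : DiagInvariant n B) {T : ℤ × ℤ → ℤ × ℤ}
    (hT : ∀ p c, (n : ℤ) ∣ c → T (p.1 + c, p.2 + c) = ((T p).1 + c, (T p).2 + c))
    (hTT : Function.Involutive T) (hAB : Set.MapsTo T A B) (hBA : Set.MapsTo T B A) :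
    (windowPairs n ∩ A).ncard = (windowPairs n ∩ B).ncard := by
  have hinv : ∀ p ∈ windowPairs n, toWindowPair n (T (toWindowPair n (T p))) = p := by
    intro p hp
    have hc := dvd_toWindow_sub n (T p).1
    change toWindowPair n (T ((T p).1 + _, (T p).2 + _)) = p
    rw [hT _ _ hc, hTT, toWindowPair_add_of_dvd hc, toWindowPair_of_mem hp]
  refine Set.BijOn.ncard_eq (Set.InvOn.bijOn (f' := fun p => toWindowPair n (T p))
    ⟨fun p hp => hinv p hp.1, fun p hp => hinv p hp.1⟩ ?_ ?_)
  · exact fun p hp => ⟨toWindowPair_mem hn _, hB.toWindowPair_mem (hAB hp.2)⟩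
  · exact fun p hp => ⟨toWindowPair_mem hn _, hA.toWindowPair_mem (hBA hp.2)⟩

def windowPairsEquivSigma (n : ℕ) (A : Set (ℤ × ℤ)) :
    ↥(windowPairs n ∩ A) ≃ Σ i : Finset.Icc (1 : ℤ) n, {j | ((i : ℤ), j) ∈ A} where
  toFun p := ⟨⟨p.1.1, p.2.1⟩, ⟨p.1.2, p.2.2⟩⟩
  invFun q := ⟨(q.1.1, q.2.1), q.1.2, q.2.2⟩
  left_inv _ := rfl
  right_inv _ := rfl

theorem ncard_windowPairs_inter {A : Set (ℤ × ℤ)} (hA : ∀ i, {j | (i, j) ∈ A}.Finite) :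
    (windowPairs n ∩ A).ncard = ∑ i ∈ Finset.Icc (1 : ℤ) n, {j | (i, j) ∈ A}.ncard := by
  have (i : Finset.Icc (1 : ℤ) n) : Finite {j | ((i : ℤ), j) ∈ A} := (hA i).to_subtype
  rw [← Nat.card_coe_set_eq, Nat.card_congr (windowPairsEquivSigma n A), Nat.card_sigma]
  simp only [Nat.card_coe_set_eq]
  exact Finset.sum_coe_sort _ (fun i => {j | (i, j) ∈ A}.ncard)

theorem finite_windowPairs_inter {A : Set (ℤ × ℤ)} (hA : ∀ i, {j | (i, j) ∈ A}.Finite) :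
    (windowPairs n ∩ A).Finite := by
  have (i : Finset.Icc (1 : ℤ) n) : Finite {j | ((i : ℤ), j) ∈ A} := (hA i).to_subtype
  exact Set.finite_coe_iff.mp (Finite.of_equiv _ (windowPairsEquivSigma n A).symm)

end WindowPairs

section CoxeterLength

variable {n : ℕ} {π : Equiv.Perm ℤ}

def inversions (π : Equiv.Perm ℤ) : Set (ℤ × ℤ) := {p | p.1 < p.2 ∧ π p.2 < π p.1}

theorem diagInvariant_inversions (hπ : π ∈ shiftCentralizer n) :
    DiagInvariant n (inversions π) := fun p hp c hc => by
  simp only [inversions, Set.mem_ofPred_eq, shiftCentralizer.apply_add_of_dvd hπ hc] at hp ⊢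
  omega

theorem finite_inversions_row (hn : 0 < n) (hπ : π ∈ shiftCentralizer n) (i : ℤ) :
    {j | (i, j) ∈ inversions π}.Finite := by
  obtain ⟨C, hC⟩ := ((Finset.Icc (1 : ℤ) n).image fun r => π r - r).bddBelow
  refine (Set.finite_Ioo i (π i - C)).subset fun j ⟨hij, hj⟩ => ⟨hij, ?_⟩
  have hjC : C ≤ π j - j := by
    rw [← (shiftCentralizer.periodic_apply_sub hπ).apply_toWindow]
    exact hC (Finset.mem_coe.mpr (Finset.mem_image_of_mem _ (toWindow_mem hn j)))
  simp only at hj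
  omega

noncomputable def codeSum (n : ℕ) (π : Equiv.Perm ℤ) : ℕ :=
  ∑ i ∈ Finset.Icc (1 : ℤ) n, codeEntry π i

theorem codeSum_eq_ncard (hn : 0 < n) (hπ : π ∈ shiftCentralizer n) :
    codeSum n π = (windowPairs n ∩ inversions π).ncard := by
  rw [ncard_windowPairs_inter (finite_inversions_row hn hπ)]
  simp only [codeSum, codeEntry, ← Nat.card_coe_set_eq]
  rfl

theorem codeSum_one : codeSum n 1 = 0 :=
  Finset.sum_eq_zero fun i _ => by
    rw [codeEntry, Nat.card_eq_zero]
    exact Or.inl ⟨fun ⟨j, hij, hji⟩ => hji.not_gt hij⟩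

theorem apply_lt_apply_add_one_of_dvd (hπ : π ∈ shiftCentralizer n) {r k : ℤ}
    (h : π r < π (r + 1)) (hk : (n : ℤ) ∣ k - r) : π k < π (k + 1) := by
  have e1 := shiftCentralizer.apply_add_of_dvd hπ hk r
  have e2 := shiftCentralizer.apply_add_of_dvd hπ hk (r + 1)
  rw [add_sub_cancel] at e1
  rw [show r + 1 + (k - r) = k + 1 by ring] at e2
  omega

def adjacentClass (n : ℕ) (r : ℤ) : Set (ℤ × ℤ) := {p | (n : ℤ) ∣ p.1 - r ∧ p.2 = p.1 + 1}

theorem diagInvariant_adjacentClass (r : ℤ) : DiagInvariant n (adjacentClass n r) :=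
  fun p ⟨hp, hp'⟩ c hc => ⟨by simpa [add_sub_right_comm] using dvd_add hp hc, by simp [hp']; ring⟩

theorem windowPairs_inter_inversions_mul_affS_inter_adjacentClass (hn2 : 2 ≤ n)
    (hπ : π ∈ shiftCentralizer n) {r : ℤ} (h : π r < π (r + 1)) :
    windowPairs n ∩ inversions (π * affS n r) ∩ adjacentClass n r =
      {(toWindow n r, toWindow n r + 1)} := by
  have hr := dvd_toWindow_sub n r
  ext ⟨a, b⟩
  simp only [Set.mem_inter_iff, Set.mem_singleton_iff, Prod.mk.injEq]
  constructor
  · rintro ⟨⟨ha, -⟩, hd, hb⟩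
    obtain rfl : b = a + 1 := hb
    have : a = toWindow n r :=
      eq_of_mem_window_of_dvd ha (toWindow_mem (by omega) r) (by simpa using dvd_sub hr hd)
    exact ⟨this, by rw [this]⟩
  · rintro ⟨rfl, rfl⟩
    refine ⟨⟨toWindow_mem (by omega) r, lt_add_one _, ?_⟩, hr, rfl⟩
    simp only [Equiv.Perm.mul_apply, affS_apply_of_dvd hn2 hr, affS_apply_add_one_of_dvd hn2 hr]
    exact apply_lt_apply_add_one_of_dvd hπ h hr

theorem ncard_windowPairs_inter_inversions_mul_affS_sdiff (hn2 : 2 ≤ n)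
    (hπ : π ∈ shiftCentralizer n) {r : ℤ} (h : π r < π (r + 1)) :
    (windowPairs n ∩ (inversions (π * affS n r) \ adjacentClass n r)).ncard =
      (windowPairs n ∩ inversions π).ncard := by
  have hs := affS_mem_shiftCentralizer n r
  refine ncard_windowPairs_inter_eq (by omega)
    ((diagInvariant_inversions (mul_mem hπ hs)).diff (diagInvariant_adjacentClass r))
    (diagInvariant_inversions hπ) (T := Prod.map (affS n r) (affS n r))
    (fun p c hc => by simp [shiftCentralizer.apply_add_of_dvd hs hc])
    (fun p => Prod.ext (affS_affS n r _) (affS_affS n r _)) ?_ ?_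
  · rintro ⟨a, b⟩ ⟨⟨hab, hinv⟩, hE⟩
    exact ⟨affS_lt_affS hn2 r hab hE, hinv⟩
  · rintro ⟨a, b⟩ ⟨hab, hinv⟩
    dsimp only at hab hinv
    have hsab : affS n r a < affS n r b := affS_lt_affS hn2 r hab fun ⟨hd, hb⟩ => by
      have := apply_lt_apply_add_one_of_dvd hπ h hd
      rw [← hb] at this
      omega
    refine ⟨⟨hsab, by simpa [affS_affS] using hinv⟩, fun ⟨hd, hsb⟩ => ?_⟩
    dsimp only [Prod.map_fst, Prod.map_snd] at hd hsb
    have ha : a = affS n r a + 1 := by rw [← affS_apply_of_dvd hn2 hd, affS_affS]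
    have hb : b = affS n r a := by rw [← affS_apply_add_one_of_dvd hn2 hd, ← hsb, affS_affS]
    omega

theorem codeSum_mul_affS_of_lt (hn2 : 2 ≤ n) (hπ : π ∈ shiftCentralizer n) {r : ℤ}
    (h : π r < π (r + 1)) : codeSum n (π * affS n r) = codeSum n π + 1 := by
  have hn : 0 < n := by omega
  have hπs := mul_mem hπ (affS_mem_shiftCentralizer n r)
  rw [codeSum_eq_ncard hn hπs, codeSum_eq_ncard hn hπ,
    ← Set.ncard_inter_add_ncard_sdiff_eq_ncard _ (adjacentClass n r)
      (finite_windowPairs_inter (finite_inversions_row hn hπs)),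
    windowPairs_inter_inversions_mul_affS_inter_adjacentClass hn2 hπ h, Set.ncard_singleton,
    Set.inter_sdiff_assoc, ncard_windowPairs_inter_inversions_mul_affS_sdiff hn2 hπ h, add_comm]

theorem codeSum_mul_affS_le (hn : 0 < n) (hπ : π ∈ shiftCentralizer n) (r : ℤ) :
    codeSum n (π * affS n r) ≤ codeSum n π + 1 := by
  obtain rfl | hn2 : n = 1 ∨ 2 ≤ n := by omega
  · rw [affS_one, mul_one]
    omega
  rcases (π.injective.ne (lt_add_one r).ne).lt_or_gt with h | h
  · exact (codeSum_mul_affS_of_lt hn2 hπ h).le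
  · have h' : (π * affS n r) r < (π * affS n r) (r + 1) := by
      simpa [affS_apply_self hn2, affS_apply_add_one hn2] using h
    have := codeSum_mul_affS_of_lt hn2 (mul_mem hπ (affS_mem_shiftCentralizer n r)) h'
    rw [mul_assoc, affS_mul_self, mul_one] at this
    omega

theorem codeSum_list_prod_le (hn : 0 < n) (w : List ℤ) :
    codeSum n (w.map (affS n)).prod ≤ w.length := by
  induction w using List.reverseRecOn with
  | nil => simp [codeSum_one]
  | append_singleton w r ih =>
    have hw : (w.map (affS n)).prod ∈ shiftCentralizer n :=
      Subgroup.list_prod_mem _ fun σ hσ => by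
        obtain ⟨x, -, rfl⟩ := List.mem_map.mp hσ
        exact affS_mem_shiftCentralizer n x
    simpa using (codeSum_mul_affS_le hn hw r).trans (by omega)

theorem eq_add_of_strictMono_of_surjective {f : ℤ → ℤ} (hf : StrictMono f)
    (hs : Function.Surjective f) (i : ℤ) : f i = i + f 0 := by
  have step : ∀ i, f (i + 1) = f i + 1 := fun i => by
    obtain ⟨j, hj⟩ := hs (f i + 1)
    have hij : i < j := hf.lt_iff_lt.mp (by omega)
    have := hf.monotone (show i + 1 ≤ j by omega)
    have := hf (lt_add_one i)
    omega
  induction i using Int.induction_on with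
  | zero => simp
  | succ k ih => rw [step, ih]; ring
  | pred k ih =>
    have := step (-(k : ℤ) - 1)
    rw [sub_add_cancel] at this
    omega

theorem IsAffine.eq_one_of_forall_lt (hn : 0 < n) (hπ : IsAffine n π)
    (h : ∀ r ∈ Finset.Icc (1 : ℤ) n, π r < π (r + 1)) : π = 1 := by
  have hmono : StrictMono π := strictMono_int_of_lt_succ fun i =>
    apply_lt_apply_add_one_of_dvd hπ.mem_shiftCentralizer (h _ (toWindow_mem hn i))
      (dvd_sub_comm.mp (dvd_toWindow_sub n i))
  obtain ⟨c, htr⟩ : ∃ c, ∀ i, π i = i + c :=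
    ⟨_, eq_add_of_strictMono_of_surjective hmono π.surjective⟩
  have hsum := hπ.2
  simp only [htr, Finset.sum_add_distrib, Finset.sum_const, Int.card_Icc, add_sub_cancel_right,
    Int.toNat_natCast, nsmul_eq_mul, add_eq_left, mul_eq_zero, Nat.cast_eq_zero, hn.ne',
    false_or] at hsum
  ext i
  simp [htr, hsum]

theorem exists_word_length_eq_codeSum (hn : 0 < n) (hπ : IsAffine n π) :
    ∃ w : List ℤ, (∀ x ∈ w, 1 ≤ x ∧ x ≤ (n : ℤ)) ∧ (w.map (affS n)).prod = π ∧
      w.length = codeSum n π := by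
  induction hN : codeSum n π using Nat.strong_induction_on generalizing π with
  | _ N ih =>
  obtain rfl | hne := eq_or_ne π 1
  · exact ⟨[], by simp, by simp, by simp [← hN, codeSum_one]⟩
  obtain ⟨r, hr, hdesc⟩ : ∃ r ∈ Finset.Icc (1 : ℤ) n, π (r + 1) < π r := by
    by_contra! hno
    exact hne (hπ.eq_one_of_forall_lt hn fun r hr =>
      (hno r hr).lt_of_ne (π.injective.ne (lt_add_one r).ne))
  have hn2 : 2 ≤ n := by
    by_contra
    have := shiftCentralizer.apply_add_of_dvd hπ.mem_shiftCentralizer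
      (show (n : ℤ) ∣ 1 by simp [show n = 1 by omega]) r
    omega
  have hσ := hπ.mul hn (isAffine_affS hn2 r)
  have hback : π * affS n r * affS n r = π := by rw [mul_assoc, affS_mul_self, mul_one]
  have hcount := codeSum_mul_affS_of_lt hn2 hσ.mem_shiftCentralizer (r := r) (by
    simpa [affS_apply_self hn2, affS_apply_add_one hn2] using hdesc)
  rw [hback] at hcount
  obtain ⟨w, hw, hwπ, hwlen⟩ := ih _ (by omega) hσ rfl
  refine ⟨w ++ [r], ?_, by simp [hwπ, hback], by simp [hwlen]; omega⟩
  simp only [List.mem_append, List.mem_singleton]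
  rintro x (hx | rfl)
  exacts [hw x hx, Finset.mem_Icc.mp hr]

theorem wordLength_eq_codeSum (hn : 0 < n) (hπ : IsAffine n π) :
    wordLength n π = codeSum n π := by
  obtain ⟨w, hw⟩ := exists_word_length_eq_codeSum hn hπ
  refine le_antisymm (Nat.sInf_le ⟨w, hw⟩) (le_csInf ⟨_, w, hw⟩ ?_)
  rintro _ ⟨v, -, rfl, rfl⟩
  exact codeSum_list_prod_le hn v

end CoxeterLength

/-- Each orbit of `f` contains exactly one point outside `q`, which represents it. -/
theorem card_quot_involutive {α : Type*} [Fintype α] {f : α → α} (hf : Function.Involutive f)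
    (q : α → Prop) [DecidablePred q] (hfix : ∀ a, q a → f a ≠ a)
    (hq : ∀ a, f a ≠ a → (q (f a) ↔ ¬ q a)) :
    Nat.card (Quot fun a b => f a = b) = Fintype.card α - Fintype.card {a // q a} := by
  let rep : α → α := fun a => if q a then f a else a
  have hrep : ∀ a, ¬ q (rep a) := fun a => by
    by_cases h : q a
    · simpa [rep, h] using fun h' => (hq a (hfix a h)).mp h' h
    · simp [rep, h]
  have hrep_f : ∀ a, rep (f a) = rep a := fun a => by
    by_cases hfa : f a = a
    · rw [hfa]
    by_cases h : q a
    · simp [rep, h, (hq a hfa).not.mpr (not_not.mpr h)]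
    · simp [rep, h, (hq a hfa).mpr h, hf a]
  let e : Quot (fun a b => f a = b) ≃ {a // ¬ q a} :=
    { toFun := Quot.lift (fun a => ⟨rep a, hrep a⟩) fun a b hab => by
        simp only [← hab, hrep_f]
      invFun := fun a => Quot.mk _ a.1
      left_inv := Quot.ind fun a => by
        by_cases h : q a
        · simp only [rep, h, if_true]
          exact (Quot.sound (r := fun a b => f a = b) rfl).symm
        · simp [rep, h]
      right_inv := fun ⟨a, ha⟩ => by simp [rep, ha] }
  rw [Nat.card_congr e, Nat.card_eq_fintype_card, Fintype.card_subtype_compl]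

section OrbitCount

variable {n : ℕ} {z : Equiv.Perm ℤ}

theorem Function.Periodic.apply_emod {M : Type*} {f : ℤ → M} (hf : Function.Periodic f n)
    (x : ℤ) : f (x % n) = f x := by
  rw [Int.emod_def, mul_comm]
  exact hf.sub_int_mul_eq _

theorem intCast_apply_eq_of_intCast_eq (hz : z ∈ shiftCentralizer n) {x y : ℤ}
    (h : (x : ZMod n) = y) : ((z x : ℤ) : ZMod n) = z y := by
  rw [ZMod.intCast_eq_intCast_iff_dvd_sub] at h ⊢
  rw [← add_sub_cancel x y, shiftCentralizer.apply_add_of_dvd hz h, add_sub_cancel_left]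
  exact h

theorem apply_eq_self_of_dvd (hz : z ∈ shiftCentralizer n) (hzz : Function.Involutive z)
    {x : ℤ} (h : (n : ℤ) ∣ z x - x) : z x = x := by
  have := shiftCentralizer.apply_add_of_dvd hz h x
  rw [add_sub_cancel, hzz] at this
  omega

theorem intCast_toWindow (i : ℤ) : ((toWindow n i : ℤ) : ZMod n) = i :=
  (ZMod.intCast_eq_intCast_iff_dvd_sub _ _ _).mpr (dvd_sub_comm.mp (dvd_toWindow_sub n i))

theorem card_filter_window_eq_card_filter_zmod [NeZero n] {g : ℤ → Prop} [DecidablePred g]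
    (hg : Function.Periodic g n) :
    ((Finset.Icc (1 : ℤ) n).filter g).card =
      (Finset.univ.filter fun a : ZMod n => g (a.val : ℤ)).card := by
  have hval : ∀ i : ℤ, (((i : ZMod n).val : ℕ) : ℤ) = i % n := fun i => ZMod.val_intCast i
  refine Finset.card_nbij' (fun i => (i : ZMod n)) (fun a => toWindow n a.val) ?_ ?_ ?_ ?_
  · intro i hi
    rw [Finset.mem_coe, Finset.mem_filter] at hi ⊢
    exact ⟨Finset.mem_univ _, by rw [hval, hg.apply_emod]; exact hi.2⟩
  · intro a ha
    rw [Finset.mem_coe, Finset.mem_filter] at ha ⊢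
    exact ⟨toWindow_mem (NeZero.pos n) _, by rw [hg.apply_toWindow]; exact ha.2⟩
  · intro i hi
    rw [Finset.mem_coe, Finset.mem_filter] at hi
    change toWindow n (((i : ZMod n).val : ℕ) : ℤ) = i
    rw [hval, (toWindow_periodic n).apply_emod, toWindow_of_mem hi.1]
  · intro a _
    change ((toWindow n (a.val : ℤ) : ℤ) : ZMod n) = a
    rw [intCast_toWindow, Int.cast_natCast, ZMod.natCast_zmod_val]

theorem intCast_val_eq [NeZero n] (a : ZMod n) : (((a.val : ℕ) : ℤ) : ZMod n) = a := by
  rw [Int.cast_natCast, ZMod.natCast_zmod_val]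

def residueMap (n : ℕ) (z : Equiv.Perm ℤ) (a : ZMod n) : ZMod n := ((z (a.val : ℤ) : ℤ) : ZMod n)

theorem residueMap_involutive [NeZero n] (hz : z ∈ shiftCentralizer n)
    (hzz : Function.Involutive z) : Function.Involutive (residueMap n z) := fun a => by
  have h : (((residueMap n z a).val : ℤ) : ZMod n) = ((z a.val : ℤ) : ZMod n) := intCast_val_eq _
  rw [residueMap, intCast_apply_eq_of_intCast_eq hz h, hzz, intCast_val_eq]

theorem residueMap_eq_self_iff [NeZero n] (hz : z ∈ shiftCentralizer n)
    (hzz : Function.Involutive z) (a : ZMod n) : residueMap n z a = a ↔ z a.val = a.val := by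
  have key : residueMap n z a = a ↔ ((z a.val : ℤ) : ZMod n) = (((a.val : ℕ) : ℤ) : ZMod n) := by
    rw [intCast_val_eq]
    rfl
  rw [key, ZMod.intCast_eq_intCast_iff_dvd_sub]
  exact ⟨fun h => apply_eq_self_of_dvd hz hzz (dvd_sub_comm.mp h),
    fun h => by rw [h, sub_self]; exact dvd_zero _⟩

theorem apply_val_residueMap_sub [NeZero n] (hz : z ∈ shiftCentralizer n)
    (hzz : Function.Involutive z) (a : ZMod n) :
    z (residueMap n z a).val - (residueMap n z a).val = -(z a.val - a.val) := by
  have h1 : (((residueMap n z a).val : ℕ) : ℤ) = z a.val % n := ZMod.val_intCast _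
  have h2 : z (z a.val % n) - z a.val % n = z (z a.val) - z a.val :=
    (shiftCentralizer.periodic_apply_sub hz).apply_emod _
  rw [h1, h2, hzz]
  ring

theorem lprime_eq_card (hn : 0 < n) (hz : z ∈ shiftCentralizer n) (hzz : Function.Involutive z) :
    lprime n z = ((Finset.Icc (1 : ℤ) n).filter fun i => i < z i).card := by
  have : NeZero n := ⟨hn.ne'⟩
  have hquot := card_quot_involutive (residueMap_involutive hz hzz)
    (fun a => 0 < z (a.val : ℤ) - a.val)
    (fun a ha hfix => by rw [(residueMap_eq_self_iff hz hzz a).mp hfix, sub_self] at ha; omega)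
    (fun a ha => by
      have := (residueMap_eq_self_iff hz hzz a).not.mp ha
      rw [apply_val_residueMap_sub hz hzz]
      omega)
  have hperiodic : Function.Periodic (fun i => i < z i) n := fun i => by
    have : z (i + n) - (i + n) = z i - i := shiftCentralizer.periodic_apply_sub hz i
    exact propext ⟨fun h => by omega, fun h => by omega⟩
  rw [lprime, show (Quot fun a b : ZMod n => ((z (a.val : ℤ) : ℤ) : ZMod n) = b) =
      Quot fun a b => residueMap n z a = b from rfl, hquot, ZMod.card, Fintype.card_subtype,
    Nat.sub_sub_self (Finset.card_le_univ _ |>.trans (ZMod.card n).le),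
    card_filter_window_eq_card_filter_zmod hperiodic]
  simp only [sub_pos]

end OrbitCount

section InvolutionCode

variable {n : ℕ} {z : Equiv.Perm ℤ}

def markedInversions (z : Equiv.Perm ℤ) : Set (ℤ × ℤ) := inversions z ∩ {p | z p.2 ≤ p.1}

theorem sum_icodeEntry_eq_ncard (hn : 0 < n) (hz : z ∈ shiftCentralizer n) :
    ∑ i ∈ Finset.Icc (1 : ℤ) n, icodeEntry z i = (windowPairs n ∩ markedInversions z).ncard := by
  rw [ncard_windowPairs_inter fun i => (finite_inversions_row hn hz i).subset fun j hj => hj.1]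
  refine Finset.sum_congr rfl fun i _ => ?_
  rw [icodeEntry, ← Nat.card_coe_set_eq]
  exact Nat.card_congr (Equiv.subtypeEquivRight fun j => and_assoc.symm)

theorem windowPairs_inter_markedInversions_inter_graph (hzz : Function.Involutive z) :
    windowPairs n ∩ markedInversions z ∩ {p | p.2 = z p.1} =
      (fun i => (i, z i)) '' ((Finset.Icc (1 : ℤ) n).filter fun i => i < z i : Set ℤ) := by
  ext ⟨a, b⟩
  constructor
  · rintro ⟨⟨ha, ⟨hab, -⟩, -⟩, hb : b = z a⟩
    subst hb
    exact ⟨a, Finset.mem_filter.mpr ⟨ha, hab⟩, rfl⟩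
  · rintro ⟨a, ha, hab⟩
    obtain ⟨ha, hlt⟩ := Finset.mem_filter.mp ha
    obtain ⟨rfl, rfl⟩ := Prod.mk.inj hab
    refine ⟨⟨ha, ⟨hlt, show z (z a) < z a by rw [hzz a]; exact hlt⟩,
      show z (z a) ≤ a by rw [hzz a]⟩, rfl⟩

theorem ncard_windowPairs_inter_inversions_sdiff (hn : 0 < n) (hz : z ∈ shiftCentralizer n)
    (hzz : Function.Involutive z) :
    (windowPairs n ∩ (inversions z \ {p | z p.2 ≤ p.1})).ncard =
      (windowPairs n ∩ (markedInversions z \ {p | p.2 = z p.1})).ncard := by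
  have hI := diagInvariant_inversions hz
  have hM : DiagInvariant n {p : ℤ × ℤ | z p.2 ≤ p.1} := fun p hp c hc => by
    simpa [shiftCentralizer.apply_add_of_dvd hz hc] using hp
  have hF : DiagInvariant n {p : ℤ × ℤ | p.2 = z p.1} := fun p hp c hc => by
    simpa [shiftCentralizer.apply_add_of_dvd hz hc] using hp
  refine ncard_windowPairs_inter_eq hn (hI.diff hM) ((hI.inter hM).diff hF)
    (T := fun p => (z p.2, z p.1))
    (fun p c hc => by simp [shiftCentralizer.apply_add_of_dvd hz hc])
    (fun p => by simp [hzz _]) ?_ ?_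
  · rintro ⟨a, b⟩ hp
    simp only [markedInversions, inversions, Set.mem_sdiff, Set.mem_inter_iff, Set.mem_ofPred_eq,
      hzz a, hzz b, not_le] at hp ⊢
    exact ⟨⟨⟨hp.1.2, hp.1.1⟩, hp.2.le⟩, fun h => by rw [← h, hzz] at hp; omega⟩
  · rintro ⟨a, b⟩ hp
    simp only [markedInversions, inversions, Set.mem_sdiff, Set.mem_inter_iff, Set.mem_ofPred_eq,
      hzz a, hzz b, not_le] at hp ⊢
    have : z b ≠ a := fun h => hp.2 (by rw [← h, hzz])
    exact ⟨⟨hp.1.1.2, hp.1.1.1⟩, lt_of_le_of_ne hp.1.2 this⟩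

theorem codeSum_add_card_eq_two_mul_sum_icodeEntry (hn : 0 < n) (hz : z ∈ shiftCentralizer n)
    (hzz : Function.Involutive z) :
    codeSum n z + ((Finset.Icc (1 : ℤ) n).filter fun i => i < z i).card =
      2 * ∑ i ∈ Finset.Icc (1 : ℤ) n, icodeEntry z i := by
  have hWI := finite_windowPairs_inter (n := n) (finite_inversions_row hn hz)
  have hunmarked := Set.ncard_inter_add_ncard_sdiff_eq_ncard _ {p | z p.2 ≤ p.1} hWI
  have hgraph := Set.ncard_inter_add_ncard_sdiff_eq_ncard (windowPairs n ∩ markedInversions z)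
    {p | p.2 = z p.1} (hWI.subset fun p hp => ⟨hp.1, hp.2.1⟩)
  rw [Set.inter_assoc, ← markedInversions, Set.inter_sdiff_assoc,
    ncard_windowPairs_inter_inversions_sdiff hn hz hzz] at hunmarked
  rw [windowPairs_inter_markedInversions_inter_graph hzz,
    Set.ncard_image_of_injective _ (fun a b h => (Prod.mk.inj h).1), Set.ncard_coe_finset,
    Set.inter_sdiff_assoc] at hgraph
  rw [codeSum_eq_ncard hn hz, sum_icodeEntry_eq_ncard hn hz]
  omega

theorem icodeEntry_succ_lt_iff (hn : 0 < n) (hz : z ∈ shiftCentralizer n) (i : ℤ) :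
    icodeEntry z (i + 1) < icodeEntry z i ↔ z (i + 1) < z i ∧ z (i + 1) ≤ i := by
  let R : ℤ → Set ℤ := fun k => {j | k < j ∧ z j < z k ∧ z j ≤ k}
  have hR : ∀ k, (R k).Finite := fun k =>
    (finite_inversions_row hn hz k).subset fun j hj => ⟨hj.1, hj.2.1⟩
  have hcard : ∀ k, icodeEntry z k = (R k).ncard := fun k => Nat.card_coe_set_eq (R k)
  have hne : z i ≠ z (i + 1) := z.injective.ne (lt_add_one i).ne
  rw [hcard, hcard]
  constructor
  · intro hlt
    by_contra hvis
    refine (Set.ncard_le_ncard (fun j (hj : j ∈ R i) => ?_) (hR (i + 1))).not_gt hlt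
    obtain ⟨hij, hzj, hji⟩ := hj
    have : j ≠ i + 1 := by rintro rfl; exact hvis ⟨hzj, hji⟩
    refine ⟨by omega, ?_, by omega⟩
    rcases hne.lt_or_gt with h | h
    · omega
    · exact lt_of_le_of_lt hji (not_le.mp fun h' => hvis ⟨h, h'⟩)
  · rintro ⟨hzi, hzi'⟩
    have hsub : R (i + 1) ⊆ R i := fun j ⟨hij, hzj, hji⟩ => ⟨by omega, by omega, by omega⟩
    exact Set.ncard_lt_ncard ((Set.ssubset_iff_of_subset hsub).mpr
      ⟨i + 1, ⟨lt_add_one i, hzi, hzi'⟩, fun h => lt_irrefl _ h.1⟩) (hR i)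

end InvolutionCode

/-- `ℓ̂(z) = (ℓ(z) + ℓ'(z))/2` equals the sum of the involution code
entries, and `i` is a visible descent of `z` iff `ĉ_i > ĉ_{i+1}` (indices mod `n`;
here the involution code entries are defined for all `i ∈ ℤ`, which interprets the
indices cyclically). -/
theorem icode_sum_and_visible_descents (n : ℕ) (hn : 0 < n)
    (z : Equiv.Perm ℤ) (hz : IsAffine n z) (hzi : z⁻¹ = z) :
    wordLength n z + lprime n z =
      2 * ∑ i ∈ Finset.Icc (1 : ℤ) (n : ℤ), icodeEntry z i ∧
    ∀ i : ℤ, (z (i + 1) < z i ∧ z (i + 1) ≤ i) ↔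
      icodeEntry z (i + 1) < icodeEntry z i := by
  have hzz : Function.Involutive z := fun x => by
    nth_rewrite 1 [← hzi]
    exact z.symm_apply_apply x
  refine ⟨?_, fun i => (icodeEntry_succ_lt_iff hn hz.mem_shiftCentralizer i).symm⟩
  rw [wordLength_eq_codeSum hn hz, lprime_eq_card hn hz.mem_shiftCentralizer hzz]
  exact codeSum_add_card_eq_two_mul_sum_icodeEntry hn hz.mem_shiftCentralizer hzz
end

section
/- For z ∈ Ĩ_n the following are equivalent: (a) every visible descent of z is congruent to n mod n (i.e. Des_V(z) ⊆ {s_n}); (b) the involution code ĉ(z) is weakly increasing; (c) the inverse of α_min(z) is Grassmannian, i.e. π = α_min(z)^{-1} satisfies π^{-1}(1) < π^{-1}(2) < ... < π^{-1}(n). -/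
open scoped TensorProduct

namespace GrassAux

theorem shift {n : ℕ} {z : Equiv.Perm ℤ} (hz : ∀ i : ℤ, z (i + n) = z i + n)
    (m x : ℤ) : z (x + m * n) = z x + m * n := by
  induction m using Int.induction_on with
  | zero => simp
  | succ k ih =>
      have h1 : x + ((k : ℤ) + 1) * n = (x + k * n) + n := by ring
      rw [h1, hz (x + k * n), ih]; ring
  | pred k ih =>
      have h1 : x + (-(k : ℤ) - 1) * n + n = x + (-k) * n := by ring
      have := hz (x + (-(k : ℤ) - 1) * n)
      rw [h1, ih] at this
      omega

theorem zz {z : Equiv.Perm ℤ} (hzi : z⁻¹ = z) (x : ℤ) : z (z x) = x := by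
  have : z⁻¹ (z x) = x := Equiv.symm_apply_apply z x
  rwa [hzi] at this

theorem mod_inj {n : ℕ} {z : Equiv.Perm ℤ} (hz : ∀ i : ℤ, z (i + n) = z i + n)
    {x y : ℤ} (h : (z x - z y) % (n : ℤ) = 0) : (x - y) % (n : ℤ) = 0 := by
  have hd : (n : ℤ) ∣ (z x - z y) := Int.dvd_of_emod_eq_zero h
  obtain ⟨c, hc⟩ := hd
  have h1 : z (y + c * n) = z y + c * n := shift hz c y
  have hc' : z x - z y = c * n := by rw [hc]; ring
  have h2 : z x = z (y + c * n) := by rw [h1]; omega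
  have h3 : x = y + c * n := z.injective h2
  exact Int.emod_eq_zero_of_dvd ⟨c, by rw [h3]; ring⟩

theorem fixed_of_mod {n : ℕ} (hn : 0 < n) {z : Equiv.Perm ℤ}
    (hz : ∀ i : ℤ, z (i + n) = z i + n) (hzi : z⁻¹ = z) {x : ℤ}
    (h : (z x - x) % (n : ℤ) = 0) : z x = x := by
  obtain ⟨c, hc⟩ := Int.dvd_of_emod_eq_zero h
  have h1 : z (x + c * n) = z x + c * n := shift hz c x
  have h2 : z (z x) = x := zz hzi x
  have hc' : z x - x = c * n := by rw [hc]; ring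
  have h3 : z x = x + c * n := by omega
  rw [h3, h1, h3] at h2
  have : c = 0 := by
    have : c * n = 0 := by omega
    rcases mul_eq_zero.1 this with h | h
    · exact h
    · exfalso; omega
  omega

theorem msym {n : ℕ} {x y : ℤ} (h : (x - y) % (n:ℤ) = 0) : (y - x) % (n:ℤ) = 0 := by
  obtain ⟨c, hc⟩ := Int.dvd_of_emod_eq_zero h
  exact Int.emod_eq_zero_of_dvd ⟨-c, by rw [show y - x = -(x - y) by ring, hc]; ring⟩

theorem eq_of_small_mod {n : ℕ} {x y : ℤ} (h : (x - y) % (n : ℤ) = 0)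
    (h2 : |x - y| < n) : x = y := by
  have hd : (n : ℤ) ∣ (x - y) := Int.dvd_of_emod_eq_zero h
  obtain ⟨c, hc⟩ := hd
  rcases eq_or_ne c 0 with rfl | hc0
  · omega
  · exfalso
    have h1 : (n : ℤ) * |c| = |x - y| := by
      rw [hc, abs_mul, abs_of_nonneg (by positivity : (0:ℤ) ≤ (n:ℤ))]
    have h2' : 1 ≤ |c| := Int.one_le_abs (by omega)
    nlinarith [abs_nonneg (x - y)]

def VD (z : Equiv.Perm ℤ) (i : ℤ) : Prop := z (i+1) < z i ∧ z (i+1) ≤ i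

section Part2

variable {n : ℕ} {z : Equiv.Perm ℤ}


def ISet (z : Equiv.Perm ℤ) (i : ℤ) : Set ℤ := {j | i < j ∧ z j < z i ∧ z j ≤ i}

theorem icode_eq (z : Equiv.Perm ℤ) (i : ℤ) : icodeEntry z i = (ISet z i).ncard := by
  rw [← Nat.card_coe_set_eq]
  rfl

theorem iset_finite (hn : 0 < n) (hz : ∀ i : ℤ, z (i + n) = z i + n) (i : ℤ) :
    (ISet z i).Finite := by
  -- bound : z j ≤ i → j ≤ M
  have hne : (Finset.Icc (1:ℤ) (n:ℤ)).Nonempty := by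
    rw [Finset.nonempty_Icc]; exact_mod_cast hn
  have hne2 : ((Finset.Icc (1:ℤ) (n:ℤ)).image z).Nonempty := hne.image z
  set m := ((Finset.Icc (1:ℤ) (n:ℤ)).image z).min' hne2 with hm
  have hbound : ∀ j : ℤ, z j ≤ i → j ≤ (n:ℤ) + i - m := by
    intro j hj
    set r := (j - 1) % (n:ℤ) + 1 with hr
    have hrb : 0 ≤ (j-1) % (n:ℤ) ∧ (j-1) % (n:ℤ) < n := by
      constructor
      · exact Int.emod_nonneg _ (by positivity)
      · exact Int.emod_lt_of_pos _ (by exact_mod_cast hn)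
    have hde : (n:ℤ) * ((j-1) / (n:ℤ)) + (j-1) % (n:ℤ) = j - 1 :=
      Int.mul_ediv_add_emod _ _
    have hcomm : (n:ℤ) * ((j-1) / (n:ℤ)) = ((j-1) / (n:ℤ)) * n := mul_comm _ _
    have hj' : j = r + ((j-1) / (n:ℤ)) * n := by omega
    have hzj : z (r + ((j-1) / (n:ℤ)) * n) = z r + ((j-1) / (n:ℤ)) * n :=
      shift hz _ r
    have hmem : z r ∈ (Finset.Icc (1:ℤ) (n:ℤ)).image z := by
      apply Finset.mem_image_of_mem
      rw [Finset.mem_Icc]; omega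
    have hmle : m ≤ z r := Finset.min'_le _ _ hmem
    rw [hj'] at hj
    rw [hzj] at hj
    omega
  apply Set.Finite.subset (Set.finite_Icc (i+1) ((n:ℤ) + i - m))
  rintro j ⟨h1, _, h3⟩
  exact Set.mem_Icc.2 ⟨by omega, hbound j h3⟩

theorem icode_le (hn : 0 < n) (hz : ∀ i : ℤ, z (i + n) = z i + n) {i : ℤ}
    (h : ¬ VD z i) : icodeEntry z i ≤ icodeEntry z (i+1) := by
  rw [icode_eq, icode_eq]
  apply Set.ncard_le_ncard _ (iset_finite hn hz (i+1))
  rintro j ⟨h1, h2, h3⟩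
  have hni : z (i+1) ≥ z i ∨ z (i+1) > i := by
    by_contra hc
    push_neg at hc
    exact h ⟨by omega, by omega⟩
  have hj1 : j ≠ i + 1 := by
    rintro rfl
    rcases hni with h4 | h4 <;> omega
  refine ⟨by omega, ?_, by omega⟩
  rcases hni with h4 | h4 <;> omega

theorem icode_lt (hn : 0 < n) (hz : ∀ i : ℤ, z (i + n) = z i + n) {i : ℤ}
    (h : VD z i) : icodeEntry z (i+1) < icodeEntry z i := by
  rw [icode_eq, icode_eq]
  apply Set.ncard_lt_ncard _ (iset_finite hn hz i)
  constructor
  · rintro j ⟨h1, h2, h3⟩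
    obtain ⟨h4, h5⟩ := h
    exact ⟨by omega, by omega, by omega⟩
  · intro hsub
    have : i + 1 ∈ ISet z i := ⟨by omega, h.1, h.2⟩
    have h2 := hsub this
    obtain ⟨h3, _, _⟩ := h2
    omega

theorem vd_tr (hz : ∀ i : ℤ, z (i + n) = z i + n) (m x : ℤ)
    (h : VD z (x + m * n)) : VD z x := by
  obtain ⟨h1, h2⟩ := h
  have e1 : z (x + m * n + 1) = z (x+1) + m * n := by
    have : x + m * n + 1 = (x + 1) + m * n := by ring
    rw [this, shift hz]
  have e2 : z (x + m * n) = z x + m * n := shift hz m x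
  rw [e1, e2] at h1
  rw [e1] at h2
  exact ⟨by omega, by omega⟩

/-- (a) ↔ (d) -/
theorem part_ad (hn : 0 < n) (hz : ∀ i : ℤ, z (i + n) = z i + n) :
    (∀ i : ℤ, z (i + 1) < z i → z (i + 1) ≤ i → i % (n : ℤ) = 0) ↔
    (∀ k : ℤ, 1 ≤ k → k < n → ¬ VD z k) := by
  constructor
  · intro h k hk1 hk2 hvd
    have h1 := h k hvd.1 hvd.2
    have h2 : k % (n:ℤ) = k := Int.emod_eq_of_lt (by omega) hk2
    omega
  · intro h i h1 h2
    by_contra hne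
    have hr : 0 ≤ i % (n:ℤ) ∧ i % (n:ℤ) < n := by
      constructor
      · exact Int.emod_nonneg _ (by positivity)
      · exact Int.emod_lt_of_pos _ (by exact_mod_cast hn)
    have hde := Int.mul_ediv_add_emod i (n:ℤ)
    have hcomm : (n:ℤ) * (i / (n:ℤ)) = (i / (n:ℤ)) * n := mul_comm _ _
    have hvd : VD z (i % (n:ℤ) + (i / (n:ℤ)) * n) := by
      have : i % (n:ℤ) + (i / (n:ℤ)) * n = i := by omega
      rw [this]; exact ⟨h1, h2⟩
    have := vd_tr hz _ _ hvd
    exact h _ (by omega) (by omega) this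

/-- (d) ↔ (b) -/
theorem part_db (hn : 0 < n) (hz : ∀ i : ℤ, z (i + n) = z i + n) :
    (∀ k : ℤ, 1 ≤ k → k < n → ¬ VD z k) ↔
    (∀ i j : ℤ, 1 ≤ i → i ≤ j → j ≤ n → icodeEntry z i ≤ icodeEntry z j) := by
  constructor
  · intro h i j h1 h2
    refine Int.le_induction
      (motive := fun j _ => j ≤ (n:ℤ) → icodeEntry z i ≤ icodeEntry z j) ?_ ?_ j h2
    · intro _; exact le_refl _
    · intro j hij ih hj1
      have h6 : ¬ VD z j := h j (by omega) (by omega)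
      exact (ih (by omega)).trans (icode_le hn hz h6)
  · intro h k hk1 hk2 hvd
    have h1 := icode_lt hn hz hvd
    have h2 := h k (k+1) hk1 (by omega) (by omega)
    omega



/-- representative of the residue class of `y` in `[1,n]` -/
def rep (n : ℕ) (y : ℤ) : ℤ := (y - 1) % (n:ℤ) + 1

theorem rep_mem (hn : 0 < n) (y : ℤ) : 1 ≤ rep n y ∧ rep n y ≤ n := by
  unfold rep
  have h1 : 0 ≤ (y-1) % (n:ℤ) := Int.emod_nonneg _ (by positivity)
  have h2 : (y-1) % (n:ℤ) < n := Int.emod_lt_of_pos _ (by exact_mod_cast hn)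
  omega

theorem rep_sub (y : ℤ) : ∃ c : ℤ, y - rep n y = c * n := by
  refine ⟨(y - 1) / (n:ℤ), ?_⟩
  have := Int.mul_ediv_add_emod (y-1) (n:ℤ)
  have h2 : (n:ℤ) * ((y-1)/(n:ℤ)) = ((y-1)/(n:ℤ)) * n := mul_comm _ _
  unfold rep
  omega

theorem rep_eq_self (hn : 0 < n) {y : ℤ} (h1 : 1 ≤ y) (h2 : y ≤ n) : rep n y = y := by
  unfold rep
  rw [Int.emod_eq_of_lt (by omega) (by omega)]
  omega

theorem rep_add_mul (y c : ℤ) : rep n (y + c * n) = rep n y := by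
  unfold rep
  have : y + c * n - 1 = (y - 1) + c * n := by ring
  rw [this, Int.add_mul_emod_self_right]

/-- the partner function -/
def om (n : ℕ) (z : Equiv.Perm ℤ) (x : ℤ) : ℤ := rep n (z x)

theorem om_mem (hn : 0 < n) (x : ℤ) : 1 ≤ om n z x ∧ om n z x ≤ n := rep_mem hn _

theorem om_ex (hz : ∀ i : ℤ, z (i + n) = z i + n) (hzi : z⁻¹ = z) (x : ℤ) :
    ∃ c : ℤ, om n z x = z x - c * n ∧ z (om n z x) = x - c * n := by
  obtain ⟨c, hc⟩ := rep_sub (n := n) (z x)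
  have hneg : (-c) * (n:ℤ) = -(c * n) := by ring
  refine ⟨c, by unfold om; omega, ?_⟩
  have h1 : om n z x = z x + (-c) * n := by unfold om; omega
  rw [h1, shift hz, zz hzi]
  ring

theorem om_om (hn : 0 < n) (hz : ∀ i : ℤ, z (i + n) = z i + n) (hzi : z⁻¹ = z)
    {x : ℤ} (h1 : 1 ≤ x) (h2 : x ≤ n) : om n z (om n z x) = x := by
  obtain ⟨c, hc1, hc2⟩ := om_ex hz hzi x
  unfold om at hc2 ⊢
  rw [hc2]
  have : x - c * n = x + (-c) * n := by ring
  rw [this, rep_add_mul, rep_eq_self hn h1 h2]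

theorem om_UD (hz : ∀ i : ℤ, z (i + n) = z i + n) (hzi : z⁻¹ = z)
    {x : ℤ} (h : x < z x) : z (om n z x) < om n z x := by
  obtain ⟨c, hc1, hc2⟩ := om_ex hz hzi x
  omega

theorem om_DU (hz : ∀ i : ℤ, z (i + n) = z i + n) (hzi : z⁻¹ = z)
    {x : ℤ} (h : z x < x) : om n z x < z (om n z x) := by
  obtain ⟨c, hc1, hc2⟩ := om_ex hz hzi x
  omega

-- ## Counting

noncomputable def IccZ (n : ℕ) : Finset ℤ := Finset.Icc (1:ℤ) (n:ℤ)

theorem card_Icc_filter_lt (hn : 0 < n) {x : ℤ} (h1 : 1 ≤ x) (h2 : x ≤ (n:ℤ)+1) :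
    (((IccZ n).filter (fun y => y < x)).card : ℤ) = x - 1 := by
  have he : (IccZ n).filter (fun y => y < x) = Finset.Icc 1 (x-1) := by
    ext y
    simp only [IccZ, Finset.mem_filter, Finset.mem_Icc]
    omega
  rw [he, Int.card_Icc]
  omega

theorem card_filter_split (p q : ℤ → Prop) [DecidablePred p] [DecidablePred q] :
    ((IccZ n).filter (fun y => p y)).card
      = ((IccZ n).filter (fun y => p y ∧ q y)).card
        + ((IccZ n).filter (fun y => p y ∧ ¬ q y)).card := by
  rw [← Finset.card_filter_add_card_filter_not (s := (IccZ n).filter (fun y => p y)) (p := q)]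
  rw [Finset.filter_filter, Finset.filter_filter]

theorem cAD (hn : 0 < n) {x : ℤ} (h1 : 1 ≤ x) (h2 : x ≤ (n:ℤ)+1) :
    (((IccZ n).filter (fun y => y < x ∧ y ≤ z y)).card : ℤ)
      + ((IccZ n).filter (fun y => y < x ∧ z y < y)).card = x - 1 := by
  have hs := card_filter_split (n := n) (fun y => y < x) (fun y => y ≤ z y)
  have hc : (IccZ n).filter (fun y => y < x ∧ ¬ y ≤ z y)
      = (IccZ n).filter (fun y => y < x ∧ z y < y) := by
    apply Finset.filter_congr
    intro y _
    constructor <;> rintro ⟨hy1, hy2⟩ <;> exact ⟨hy1, by omega⟩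
  rw [hc] at hs
  have := card_Icc_filter_lt (n := n) hn h1 h2
  omega

theorem card_filter_step (p : ℤ → Prop) [DecidablePred p] (x : ℤ) :
    ((IccZ n).filter (fun y => y < x + 1 ∧ p y)).card
      = ((IccZ n).filter (fun y => y < x ∧ p y)).card
        + if (1 ≤ x ∧ x ≤ (n:ℤ) ∧ p x) then 1 else 0 := by
  have hsplit : (IccZ n).filter (fun y => y < x + 1 ∧ p y)
      = ((IccZ n).filter (fun y => y < x ∧ p y))
        ∪ ((IccZ n).filter (fun y => y = x ∧ p y)) := by
    ext y
    simp only [IccZ, Finset.mem_filter, Finset.mem_Icc, Finset.mem_union]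
    by_cases hp : p y
    · simp only [hp, and_true]; omega
    · simp [hp]
  have hdisj : Disjoint ((IccZ n).filter (fun y => y < x ∧ p y))
      ((IccZ n).filter (fun y => y = x ∧ p y)) := by
    rw [Finset.disjoint_left]
    intro y hy1 hy2
    simp only [Finset.mem_filter] at hy1 hy2
    omega
  rw [hsplit, Finset.card_union_of_disjoint hdisj]
  congr 1
  split_ifs with h
  · rw [show ((IccZ n).filter (fun y => y = x ∧ p y)) = {x} from ?_]
    · exact Finset.card_singleton x
    · ext y
      simp only [IccZ, Finset.mem_filter, Finset.mem_Icc, Finset.mem_singleton]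
      constructor
      · rintro ⟨_, rfl, _⟩; rfl
      · rintro rfl; exact ⟨⟨h.1, h.2.1⟩, rfl, h.2.2⟩
  · rw [show ((IccZ n).filter (fun y => y = x ∧ p y)) = ∅ from ?_]
    · exact Finset.card_empty
    · ext y
      simp only [IccZ, Finset.mem_filter, Finset.mem_Icc, Finset.notMem_empty, iff_false]
      rintro ⟨⟨hb1, hb2⟩, rfl, hp⟩
      exact h ⟨hb1, hb2, hp⟩

theorem card_filter_interval (p : ℤ → Prop) [DecidablePred p] {lo hi : ℤ} (h : lo ≤ hi) :
    ((IccZ n).filter (fun y => y < hi ∧ p y)).card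
      = ((IccZ n).filter (fun y => y < lo ∧ p y)).card
        + ((IccZ n).filter (fun y => (lo ≤ y ∧ y < hi) ∧ p y)).card := by
  have hsplit : (IccZ n).filter (fun y => y < hi ∧ p y)
      = ((IccZ n).filter (fun y => y < lo ∧ p y))
        ∪ ((IccZ n).filter (fun y => (lo ≤ y ∧ y < hi) ∧ p y)) := by
    ext y
    simp only [IccZ, Finset.mem_filter, Finset.mem_Icc, Finset.mem_union]
    by_cases hp : p y
    · simp only [hp, and_true]; omega
    · simp [hp]
  have hdisj : Disjoint ((IccZ n).filter (fun y => y < lo ∧ p y))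
      ((IccZ n).filter (fun y => (lo ≤ y ∧ y < hi) ∧ p y)) := by
    rw [Finset.disjoint_left]
    intro y hy1 hy2
    simp only [Finset.mem_filter] at hy1 hy2
    omega
  rw [hsplit, Finset.card_union_of_disjoint hdisj]

theorem card_interval_total (hn : 0 < n) {lo hi : ℤ} (h1 : 1 ≤ lo) (h2 : lo ≤ hi)
    (h3 : hi ≤ (n:ℤ)+1) :
    (((IccZ n).filter (fun y => lo ≤ y ∧ y < hi)).card : ℤ) = hi - lo := by
  have he : (IccZ n).filter (fun y => lo ≤ y ∧ y < hi) = Finset.Icc lo (hi-1) := by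
    ext y
    simp only [IccZ, Finset.mem_filter, Finset.mem_Icc]
    omega
  rw [he, Int.card_Icc]
  omega

theorem card_UD_interval_le {lo hi : ℤ} :
    ((IccZ n).filter (fun y => (lo ≤ y ∧ y < hi) ∧ y < z y)).card
      + ((IccZ n).filter (fun y => (lo ≤ y ∧ y < hi) ∧ z y < y)).card
      ≤ ((IccZ n).filter (fun y => lo ≤ y ∧ y < hi)).card := by
  rw [← Finset.card_union_of_disjoint]
  · apply Finset.card_le_card
    intro y hy
    simp only [Finset.mem_filter, Finset.mem_union] at hy ⊢
    rcases hy with ⟨h1, h2, _⟩ | ⟨h1, h2, _⟩ <;> exact ⟨h1, h2⟩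
  · rw [Finset.disjoint_left]
    intro y hy1 hy2
    simp only [Finset.mem_filter] at hy1 hy2
    omega

-- ## the S-function and the two key inequalities

/-- `S(x) = #U_{<x} - #D_{<x}` -/
noncomputable def Sf (n : ℕ) (z : Equiv.Perm ℤ) (x : ℤ) : ℤ :=
  (((IccZ n).filter (fun y => y < x ∧ y < z y)).card : ℤ)
    - ((IccZ n).filter (fun y => y < x ∧ z y < y)).card

theorem sf_sub {lo hi : ℤ} (h : lo ≤ hi) :
    Sf n z hi - Sf n z lo
      = (((IccZ n).filter (fun y => (lo ≤ y ∧ y < hi) ∧ y < z y)).card : ℤ)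
        - ((IccZ n).filter (fun y => (lo ≤ y ∧ y < hi) ∧ z y < y)).card := by
  have h1 := card_filter_interval (n := n) (fun y => y < z y) h
  have h2 := card_filter_interval (n := n) (fun y => z y < y) h
  unfold Sf
  omega

theorem one_le_UI {lo hi u : ℤ} (hu1 : 1 ≤ u) (hu2 : u ≤ (n:ℤ)) (h3 : lo ≤ u)
    (h4 : u < hi) (h5 : u < z u) :
    1 ≤ ((IccZ n).filter (fun y => (lo ≤ y ∧ y < hi) ∧ y < z y)).card := by
  apply Finset.card_pos.2
  exact ⟨u, by
    simp only [IccZ, Finset.mem_filter, Finset.mem_Icc]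
    exact ⟨⟨hu1, hu2⟩, ⟨h3, h4⟩, h5⟩⟩

theorem one_le_DI {lo hi u : ℤ} (hu1 : 1 ≤ u) (hu2 : u ≤ (n:ℤ)) (h3 : lo ≤ u)
    (h4 : u < hi) (h5 : z u < u) :
    1 ≤ ((IccZ n).filter (fun y => (lo ≤ y ∧ y < hi) ∧ z y < y)).card := by
  apply Finset.card_pos.2
  exact ⟨u, by
    simp only [IccZ, Finset.mem_filter, Finset.mem_Icc]
    exact ⟨⟨hu1, hu2⟩, ⟨h3, h4⟩, h5⟩⟩

theorem mul_le_of_le {q r : ℤ} (h : q ≤ r) : q * (n:ℤ) ≤ r * n :=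
  mul_le_mul_of_nonneg_right h (by positivity)

/-- the key pair-counting bound -/
theorem core (hn : 0 < n) (hz : ∀ i : ℤ, z (i + n) = z i + n) (hzi : z⁻¹ = z)
    {lo hi : ℤ} (hlo : 1 ≤ lo) (hhin : hi ≤ (n:ℤ)) (hlh : lo < hi) (hU : hi < z hi) :
    (((IccZ n).filter (fun y => (lo ≤ y ∧ y < hi) ∧ y < z y)).card : ℤ)
      - ((IccZ n).filter (fun y => (lo ≤ y ∧ y < hi) ∧ z y < y)).card
      ≤ (n:ℤ) - (hi - lo) - 1 := by
  set UI := (IccZ n).filter (fun y => (lo ≤ y ∧ y < hi) ∧ y < z y) with hUI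
  set DI := (IccZ n).filter (fun y => (lo ≤ y ∧ y < hi) ∧ z y < y) with hDI
  -- step 1 : UI.card ≤ T.card + DI.card
  have hsplit := Finset.card_filter_add_card_filter_not
    (s := UI) (p := fun w => lo ≤ om n z w ∧ om n z w < hi)
  have hstep1 : (UI.filter (fun w => lo ≤ om n z w ∧ om n z w < hi)).card ≤ DI.card := by
    apply Finset.card_le_card_of_injOn (fun w => om n z w)
    · intro w hw
      simp only [Finset.mem_coe, hUI, hDI, IccZ, Finset.mem_filter, Finset.mem_Icc] at hw ⊢
      obtain ⟨⟨⟨hw1, hw2⟩, hwint, hwU⟩, hwo⟩ := hw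
      exact ⟨⟨(om_mem hn w).1, (om_mem hn w).2⟩, hwo, om_UD hz hzi hwU⟩
    · intro w1 hw1 w2 hw2 heq
      simp only [Finset.coe_filter, Set.mem_setOf_eq, hUI, IccZ, Finset.mem_filter,
        Finset.mem_Icc] at hw1 hw2
      simp only [] at heq
      have e1 := om_om hn hz hzi hw1.1.1.1 hw1.1.1.2
      have e2 := om_om hn hz hzi hw2.1.1.1 hw2.1.1.2
      rw [← e1, ← e2, heq]
  -- step 2 : T.card ≤ #(complement) - 1
  set O := ((IccZ n).filter (fun y => ¬ (lo ≤ y ∧ y < hi))).erase hi with hO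
  have hstep2 : (UI.filter (fun w => ¬ (lo ≤ om n z w ∧ om n z w < hi))).card ≤ O.card := by
    apply Finset.card_le_card_of_injOn (fun w => om n z w)
    · intro w hw
      simp only [Finset.mem_coe, hUI, IccZ, Finset.mem_filter, Finset.mem_Icc] at hw
      obtain ⟨⟨⟨hw1, hw2⟩, hwint, hwU⟩, hwo⟩ := hw
      rw [hO]
      rw [Finset.mem_coe, Finset.mem_erase]
      constructor
      · -- om w ≠ hi
        intro heq
        have e1 := om_om hn hz hzi hw1 hw2
        rw [show om n z w = hi from heq] at e1
        -- w = om hi which is a D-type element, contradiction with w < z w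
        have hD := om_UD hz hzi hU
        rw [e1] at hD
        omega
      · simp only [IccZ, Finset.mem_filter, Finset.mem_Icc]
        exact ⟨⟨(om_mem hn w).1, (om_mem hn w).2⟩, hwo⟩
    · intro w1 hw1 w2 hw2 heq
      simp only [Finset.coe_filter, Set.mem_setOf_eq, hUI, IccZ, Finset.mem_filter,
        Finset.mem_Icc] at hw1 hw2
      simp only [] at heq
      have e1 := om_om hn hz hzi hw1.1.1.1 hw1.1.1.2
      have e2 := om_om hn hz hzi hw2.1.1.1 hw2.1.1.2
      rw [← e1, ← e2, heq]
  -- step 3 : O.card = n - (hi - lo) - 1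
  have hhimem : hi ∈ (IccZ n).filter (fun y => ¬ (lo ≤ y ∧ y < hi)) := by
    simp only [IccZ, Finset.mem_filter, Finset.mem_Icc]
    omega
  have hOcard : (O.card : ℤ) = (n:ℤ) - (hi - lo) - 1 := by
    rw [hO, Finset.card_erase_of_mem hhimem]
    have hcompl := Finset.card_filter_add_card_filter_not
      (s := IccZ n) (p := fun y => lo ≤ y ∧ y < hi)
    have htot := card_interval_total (n := n) hn hlo (le_of_lt hlh) (by omega)
    have hicc : ((IccZ n).card : ℤ) = n := by
      rw [IccZ, Int.card_Icc]
      omega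
    have h1le : 1 ≤ ((IccZ n).filter (fun y => ¬ (lo ≤ y ∧ y < hi))).card :=
      Finset.card_pos.2 ⟨hi, hhimem⟩
    omega
  omega

/-- key inequality for comparing a D-residue with its neighbours -/
theorem L2 (hn : 0 < n) (hz : ∀ i : ℤ, z (i + n) = z i + n) (hzi : z⁻¹ = z)
    {d : ℤ} (hd1 : 1 ≤ d) (hdn : d ≤ (n:ℤ)) (hD : z d < d) :
    Sf n z (om n z d) + z d ≤ Sf n z d + d - 1 := by
  obtain ⟨c, hc1, hc2⟩ := om_ex hz hzi d
  have hub := om_mem (z := z) hn d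
  have hUU : om n z d < z (om n z d) := om_DU hz hzi hD
  set u := om n z d with hu
  -- c ≤ 0
  have hc0 : c ≤ 0 := by
    by_contra hcpos
    push_neg at hcpos
    have h1 := mul_le_of_le (n := n) (show (1:ℤ) ≤ c by omega)
    have h2 : (1:ℤ) * n = n := one_mul _
    omega
  have hcn0 : 0 ≤ -(c * (n:ℤ)) := by
    have h1 := mul_le_of_le (n := n) hc0
    have h2 : (0:ℤ) * n = 0 := zero_mul _
    omega
  rcases lt_trichotomy u d with hud | hud | hud
  · -- u < d
    have hsf := sf_sub (n := n) (z := z) (le_of_lt hud)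
    have hui := one_le_UI (n := n) (lo := u) (hi := d) hub.1 hub.2 (le_refl u) hud hUU
    have hle := card_UD_interval_le (n := n) (z := z) (lo := u) (hi := d)
    have htot := card_interval_total (n := n) hn (lo := u) (hi := d) (by omega)
      (by omega) (by omega)
    omega
  · exfalso
    rw [hud] at hUU
    omega
  · -- d < u
    have hcm1 : c ≤ -1 := by
      rcases (by omega : c ≤ -1 ∨ c = 0) with h | h
      · exact h
      · exfalso; rw [h] at hc1; simp at hc1; omega
    rcases (by omega : c = -1 ∨ c ≤ -2) with hcm | hcm
    · -- q = 1 : use core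
      have hcore := core hn hz hzi (lo := d) (hi := u) (by omega) hub.2 hud hUU
      have hsf := sf_sub (n := n) (z := z) (le_of_lt hud)
      have hcn : c * (n:ℤ) = -(n:ℤ) := by rw [hcm]; ring
      omega
    · -- q ≥ 2
      have hsf := sf_sub (n := n) (z := z) (le_of_lt hud)
      have hle := card_UD_interval_le (n := n) (z := z) (lo := d) (hi := u)
      have htot := card_interval_total (n := n) hn (lo := d) (hi := u) (by omega)
        (by omega) (by omega)
      have hdi := one_le_DI (n := n) (lo := d) (hi := u) hd1 hdn (le_refl d) hud hD
      have h1 := mul_le_of_le (n := n) hcm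
      have h2 : (-2:ℤ) * n = -(2 * (n:ℤ)) := by ring
      omega

/-- key inequality comparing two D-residues -/
theorem L1 (hn : 0 < n) (hz : ∀ i : ℤ, z (i + n) = z i + n) (hzi : z⁻¹ = z)
    {d e : ℤ} (hd1 : 1 ≤ d) (hdn : d ≤ (n:ℤ)) (he1 : 1 ≤ e) (hen : e ≤ (n:ℤ))
    (hDd : z d < d) (hDe : z e < e) (hlt : z d < z e) :
    Sf n z (om n z d) + z d < Sf n z (om n z e) + z e := by
  obtain ⟨s, hs1, hs2⟩ := om_ex hz hzi d
  obtain ⟨t, ht1, ht2⟩ := om_ex hz hzi e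
  have hub := om_mem (z := z) hn d
  have hvb := om_mem (z := z) hn e
  have hUu : om n z d < z (om n z d) := om_DU hz hzi hDd
  have hUv : om n z e < z (om n z e) := om_DU hz hzi hDe
  set u := om n z d with hu
  set v := om n z e with hv
  have hune : u ≠ v := by
    intro heq
    -- then z d ≡ z e mod n, so d ≡ e mod n, so d = e
    have hdv : (z d - z e) % (n:ℤ) = 0 := by
      apply Int.emod_eq_zero_of_dvd
      refine ⟨s - t, ?_⟩
      have : z d - z e = s * n - t * n := by omega
      rw [this]; ring
    have hde : (d - e) % (n:ℤ) = 0 := mod_inj hz hdv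
    have hdee : d = e := eq_of_small_mod hde (by rw [abs_sub_lt_iff]; omega)
    rw [hdee] at hlt
    exact lt_irrefl _ hlt
  rcases lt_trichotomy u v with huv | huv | huv
  · -- u < v : then s ≤ t
    have hst : s ≤ t := by
      by_contra hcon
      push_neg at hcon
      have h1 := mul_le_of_le (n := n) (show (1:ℤ) ≤ s - t by omega)
      have h2 : (s - t) * (n:ℤ) = s * n - t * n := by ring
      have h3 : (1:ℤ) * n = n := one_mul _
      omega
    have h4 := mul_le_of_le (n := n) hst
    have hsf := sf_sub (n := n) (z := z) (le_of_lt huv)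
    have hui := one_le_UI (n := n) (lo := u) (hi := v) hub.1 hub.2 (le_refl u) huv hUu
    have hle := card_UD_interval_le (n := n) (z := z) (lo := u) (hi := v)
    have htot := card_interval_total (n := n) hn (lo := u) (hi := v) (by omega)
      (by omega) (by omega)
    omega
  · exact absurd huv hune
  · -- v < u : then s ≤ t - 1
    have hst : s ≤ t - 1 := by
      by_contra hcon
      push_neg at hcon
      have h1 := mul_le_of_le (n := n) (show (0:ℤ) ≤ s - t by omega)
      have h2 : (s - t) * (n:ℤ) = s * n - t * n := by ring
      have h3 : (0:ℤ) * n = 0 := zero_mul _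
      omega
    rcases (by omega : s = t - 1 ∨ s ≤ t - 2) with hcm | hcm
    · have hcore := core hn hz hzi (lo := v) (hi := u) (by omega) hub.2 huv hUu
      have hsf := sf_sub (n := n) (z := z) (le_of_lt huv)
      have hcn : s * (n:ℤ) = t * n - n := by rw [hcm]; ring
      omega
    · have hsf := sf_sub (n := n) (z := z) (le_of_lt huv)
      have hle := card_UD_interval_le (n := n) (z := z) (lo := v) (hi := u)
      have htot := card_interval_total (n := n) hn (lo := v) (hi := u) (by omega)
        (by omega) (by omega)
      have h1 := mul_le_of_le (n := n) (show s - t ≤ -2 by omega)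
      have h2 : (s - t) * (n:ℤ) = s * n - t * n := by ring
      have h3 : (-2:ℤ) * n = -(2 * (n:ℤ)) := by ring
      omega

-- ## the window list

def blkL (z : Equiv.Perm ℤ) (b : ℤ) : List ℤ := if z b = b then [b] else [z b, b]

noncomputable def AsortL (n : ℕ) (z : Equiv.Perm ℤ) : List ℤ :=
  ((Finset.Icc (1 : ℤ) (n : ℤ)).sort (· ≤ ·)).filter fun a => a ≤ z a

noncomputable def LWin (n : ℕ) (z : Equiv.Perm ℤ) : List ℤ := (AsortL n z).flatMap (blkL z)

theorem mem_AsortL {x : ℤ} : x ∈ AsortL n z ↔ (1 ≤ x ∧ x ≤ n) ∧ x ≤ z x := by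
  unfold AsortL
  rw [List.mem_filter]
  simp [Finset.mem_sort, Finset.mem_Icc]

theorem sorted_AsortL : (AsortL n z).Pairwise (· < ·) :=
  List.Pairwise.sublist List.filter_sublist (Finset.sortedLT_sort _).pairwise

theorem dedupMod_nil : dedupMod n [] = [] := by rw [dedupMod]

theorem dedupMod_cons (x : ℤ) (xs : List ℤ) :
    dedupMod n (x :: xs)
      = x :: dedupMod n (xs.filter fun y => (y - x) % (n : ℤ) ≠ 0) := by
  rw [dedupMod]

theorem dedup_flat (hn : 0 < n) (hz : ∀ i : ℤ, z (i + n) = z i + n) (hzi : z⁻¹ = z) :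
    ∀ l : List ℤ,
      l.Pairwise (fun a b => (a - b) % (n:ℤ) ≠ 0) →
      (∀ a ∈ l, a ≤ z a) →
      (∀ a ∈ l, ∀ b ∈ l, (z a - b) % (n:ℤ) = 0 → z a = a ∧ a = b) →
      dedupMod n (l.flatMap (fun a => [z a, a])) = l.flatMap (blkL z) := by
  intro l
  induction l with
  | nil => simp [dedupMod_nil]
  | cons a t ih =>
    intro hp h1 h3
    obtain ⟨hpa, hpt⟩ := List.pairwise_cons.1 hp
    have haz : a ≤ z a := h1 a (List.mem_cons_self)
    have hihyp := ih hpt (fun b hb => h1 b (List.mem_cons_of_mem _ hb))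
      (fun b hb c hc hm => h3 b (List.mem_cons_of_mem _ hb) c (List.mem_cons_of_mem _ hc) hm)
    have hrest : ∀ y ∈ t.flatMap (fun b => [z b, b]),
        (y - z a) % (n:ℤ) ≠ 0 ∧ (y - a) % (n:ℤ) ≠ 0 := by
      intro y hy
      rw [List.mem_flatMap] at hy
      obtain ⟨b, hb, hyb⟩ := hy
      have hab : (a - b) % (n:ℤ) ≠ 0 := hpa b hb
      simp only [List.mem_cons, List.mem_singleton, List.not_mem_nil, or_false] at hyb
      rcases hyb with hybe | hybe
      · constructor
        · intro hmod
          rw [hybe] at hmod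
          exact hab (msym (mod_inj hz hmod))
        · intro hmod
          rw [hybe] at hmod
          have h4 := h3 b (List.mem_cons_of_mem _ hb) a (List.mem_cons_self) hmod
          exact hab (by rw [← h4.2]; simp)
      · constructor
        · intro hmod
          rw [hybe] at hmod
          have h4 := h3 a (List.mem_cons_self) b (List.mem_cons_of_mem _ hb) (msym hmod)
          exact hab (by rw [h4.2]; simp)
        · intro hmod
          rw [hybe] at hmod
          exact hab (msym hmod)
    have hfe : (t.flatMap (fun b => [z b, b])).filter
        (fun y => decide ((y - z a) % (n:ℤ) ≠ 0)) = t.flatMap (fun b => [z b, b]) :=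
      List.filter_eq_self.2 (fun y hy => by simpa using (hrest y hy).1)
    have hfe2 : (t.flatMap (fun b => [z b, b])).filter
        (fun y => decide ((y - a) % (n:ℤ) ≠ 0)) = t.flatMap (fun b => [z b, b]) :=
      List.filter_eq_self.2 (fun y hy => by simpa using (hrest y hy).2)
    rcases eq_or_ne (z a) a with hfix | hnfix
    · rw [List.flatMap_cons, List.flatMap_cons]
      have hblk : blkL z a = [a] := by unfold blkL; rw [if_pos hfix]
      rw [hblk]
      show dedupMod n (z a :: a :: t.flatMap (fun b => [z b, b])) = a :: t.flatMap (blkL z)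
      rw [dedupMod_cons]
      rw [List.filter_cons]
      have hda : (decide ((a - z a) % (n:ℤ) ≠ 0)) = false := by
        simp [hfix]
      rw [hda]
      simp only [Bool.false_eq_true, if_false]
      rw [hfe, hihyp, hfix]
    · rw [List.flatMap_cons, List.flatMap_cons]
      have hblk : blkL z a = [z a, a] := by unfold blkL; rw [if_neg hnfix]
      rw [hblk]
      show dedupMod n (z a :: a :: t.flatMap (fun b => [z b, b]))
        = z a :: a :: t.flatMap (blkL z)
      rw [dedupMod_cons]
      rw [List.filter_cons]
      have hda : (decide ((a - z a) % (n:ℤ) ≠ 0)) = true := by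
        simp only [decide_eq_true_eq, ne_eq]
        intro hmod
        exact hnfix (fixed_of_mod hn hz hzi (msym hmod))
      rw [hda]
      simp only [if_true]
      rw [hfe, dedupMod_cons, hfe2, hihyp]

theorem window_eq (hn : 0 < n) (hz : ∀ i : ℤ, z (i + n) = z i + n) (hzi : z⁻¹ = z) :
    aminWindow n z = LWin n z := by
  have h0 : aminWindow n z = dedupMod n ((AsortL n z).flatMap (fun a => [z a, a])) := rfl
  rw [h0]
  apply dedup_flat hn hz hzi
  · apply List.Pairwise.imp_of_mem (l := AsortL n z)
      (R := (· < ·))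
    · intro a b ha hb hlt hmod
      have ha' := mem_AsortL (n := n) (z := z) |>.1 ha
      have hb' := mem_AsortL (n := n) (z := z) |>.1 hb
      have := eq_of_small_mod hmod (by rw [abs_sub_lt_iff]; omega)
      omega
    · exact sorted_AsortL
  · intro a ha
    exact (mem_AsortL.1 ha).2
  · intro a ha b hb hmod
    have ha' := mem_AsortL (n := n) (z := z) |>.1 ha
    have hb' := mem_AsortL (n := n) (z := z) |>.1 hb
    obtain ⟨c, hc⟩ := Int.dvd_of_emod_eq_zero hmod
    have hc' : z a - b = c * n := by rw [hc]; ring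
    have h4 : z (z a + (-c) * n) = z (z a) + (-c) * n := shift hz (-c) (z a)
    have h5 : (-c) * (n:ℤ) = -(c * n) := by ring
    have h6 : z b = a - c * n := by
      rw [zz hzi] at h4
      have : b = z a + (-c) * n := by omega
      rw [this, h4]
      omega
    -- b ≤ z b = a - c*n  and  a ≤ z a = b + c*n  forces z a = a
    have hfix : z a = a := by omega
    refine ⟨hfix, ?_⟩
    apply eq_of_small_mod (n := n) _ (by rw [abs_sub_lt_iff]; omega)
    rw [show a - b = z a - b by omega]
    exact hmod

-- ## lengths and positions

theorem countP_sort (s : Finset ℤ) (p : ℤ → Prop) [DecidablePred p] :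
    (s.sort (·≤·)).countP (fun y => decide (p y)) = (s.filter p).card := by
  rw [(Finset.sort_perm_toList s (·≤·)).countP_eq]
  rw [← Multiset.coe_countP]
  rw [Finset.coe_toList]
  rw [Multiset.countP_eq_card_filter]
  rfl

theorem length_sort_filter (s : Finset ℤ) (p : ℤ → Prop) [DecidablePred p] :
    (((s.sort (·≤·)).filter (fun y => decide (p y))).length) = (s.filter p).card := by
  rw [← List.countP_eq_length_filter]
  exact countP_sort s p

theorem flat_len (l : List ℤ) :
    (l.flatMap (blkL z)).length = l.length + l.countP (fun b => decide (¬ z b = b)) := by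
  induction l with
  | nil => simp
  | cons a t ih =>
    rw [List.flatMap_cons, List.length_append, ih, List.countP_cons, List.length_cons]
    by_cases h : z a = a
    · simp only [decide_not] at ih ⊢
      simp [blkL, h]
      omega
    · simp only [decide_not] at ih ⊢
      simp [blkL, h]
      omega

/-- number of window entries coming from blocks before `x` -/
noncomputable def Bl (n : ℕ) (z : Equiv.Perm ℤ) (x : ℤ) : ℕ :=
  (((AsortL n z).filter (fun y => decide (y < x))).flatMap (blkL z)).length

theorem Bl_card (x : ℤ) : (Bl n z x)
    = ((IccZ n).filter (fun y => y < x ∧ y ≤ z y)).card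
      + ((IccZ n).filter (fun y => y < x ∧ y < z y)).card := by
  unfold Bl
  rw [flat_len]
  congr 1
  · unfold AsortL
    rw [List.filter_filter]
    have hfun : (fun a => decide (a < x) && decide (a ≤ z a))
        = (fun a => decide (a < x ∧ a ≤ z a)) := by
      funext a
      by_cases h1 : a < x <;> by_cases h2 : a ≤ z a <;> simp [h1, h2]
    rw [hfun]
    rw [length_sort_filter (Finset.Icc (1:ℤ) (n:ℤ)) (fun a => a < x ∧ a ≤ z a)]
    rfl
  · unfold AsortL
    rw [List.countP_filter, List.countP_filter]
    have hfun : (fun a => (decide (¬ z a = a) && decide (a < x)) && decide (a ≤ z a))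
        = (fun a => decide (a < x ∧ a < z a)) := by
      funext a
      rcases lt_trichotomy a (z a) with h | h | h
      · by_cases h3 : a < x <;>
          simp [h3, h, show ¬ z a = a by omega, show a ≤ z a by omega]
      · by_cases h3 : a < x <;>
          simp [h3, h.symm, show ¬ a < z a by omega]
      · by_cases h3 : a < x <;>
          simp [h3, show ¬ a ≤ z a by omega, show ¬ a < z a by omega]
    rw [hfun]
    exact countP_sort _ _

theorem getD_LWin {u : ℤ} (hu : u ∈ AsortL n z) :
    (∀ j : ℕ, j < (blkL z u).length →
        (LWin n z).getD (Bl n z u + j) 0 = (blkL z u).getD j 0)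
    ∧ Bl n z u + (blkL z u).length ≤ (LWin n z).length := by
  obtain ⟨l1, l2, he⟩ := List.append_of_mem hu
  have hsort := sorted_AsortL (n := n) (z := z)
  rw [he, List.pairwise_append] at hsort
  obtain ⟨hp1, hp2, hcross⟩ := hsort
  have hl1 : (AsortL n z).filter (fun y => decide (y < u)) = l1 := by
    rw [he, List.filter_append]
    have h1 : l1.filter (fun y => decide (y < u)) = l1 :=
      List.filter_eq_self.2
        (fun y hy => by simpa using hcross y hy u (List.mem_cons_self))
    have h2 : (u :: l2).filter (fun y => decide (y < u)) = [] := by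
      rw [List.filter_cons]
      have hd : (decide (u < u)) = false := by simp
      rw [hd]
      simp only [Bool.false_eq_true, if_false]
      refine List.filter_eq_nil_iff.2 (fun y hy => ?_)
      have := (List.pairwise_cons.1 hp2).1 y hy
      simp
      omega
    rw [h1, h2, List.append_nil]
  have hlw : LWin n z = (l1.flatMap (blkL z)) ++ (blkL z u ++ l2.flatMap (blkL z)) := by
    rw [LWin, he, List.flatMap_append, List.flatMap_cons]
  have hBl : Bl n z u = (l1.flatMap (blkL z)).length := by rw [Bl, hl1]
  constructor
  · intro j hj
    rw [hlw, hBl]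
    rw [List.getD_append_right _ _ _ _ (by omega)]
    rw [Nat.add_sub_cancel_left]
    exact List.getD_append _ _ _ _ hj
  · rw [hlw, hBl, List.length_append, List.length_append]
    omega

theorem cUD_total (hn : 0 < n) (hz : ∀ i : ℤ, z (i + n) = z i + n) (hzi : z⁻¹ = z) :
    ((IccZ n).filter (fun y => y < z y)).card
      = ((IccZ n).filter (fun y => z y < y)).card := by
  apply Finset.card_bij' (i := fun u _ => om n z u) (j := fun d _ => om n z d)
  · intro u hu
    simp only [IccZ, Finset.mem_filter, Finset.mem_Icc] at hu ⊢
    exact ⟨⟨(om_mem hn u).1, (om_mem hn u).2⟩, om_UD hz hzi hu.2⟩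
  · intro d hd
    simp only [IccZ, Finset.mem_filter, Finset.mem_Icc] at hd ⊢
    exact ⟨⟨(om_mem hn d).1, (om_mem hn d).2⟩, om_DU hz hzi hd.2⟩
  · intro u hu
    simp only [IccZ, Finset.mem_filter, Finset.mem_Icc] at hu
    exact om_om hn hz hzi hu.1.1 hu.1.2
  · intro d hd
    simp only [IccZ, Finset.mem_filter, Finset.mem_Icc] at hd
    exact om_om hn hz hzi hd.1.1 hd.1.2

theorem len_LWin (hn : 0 < n) (hz : ∀ i : ℤ, z (i + n) = z i + n) (hzi : z⁻¹ = z) :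
    (LWin n z).length = n := by
  rw [LWin, flat_len]
  have e1 : (AsortL n z).length = ((IccZ n).filter (fun y => y ≤ z y)).card :=
    length_sort_filter (Finset.Icc (1:ℤ) (n:ℤ)) (fun y => y ≤ z y)
  have e2 : (AsortL n z).countP (fun b => decide (¬ z b = b))
      = ((IccZ n).filter (fun y => y < z y)).card := by
    unfold AsortL
    rw [List.countP_filter]
    have hfun : (fun a => decide (¬ z a = a) && decide (a ≤ z a))
        = (fun a => decide (a < z a)) := by
      funext a
      rcases lt_trichotomy a (z a) with h | h | h
      · simp [h, show ¬ z a = a by omega, show a ≤ z a by omega]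
      · simp [h.symm, show ¬ a < z a by omega]
      · simp [show ¬ a ≤ z a by omega, show ¬ a < z a by omega]
    rw [hfun]
    exact countP_sort _ _
  rw [e1, e2]
  -- now : cardA_tot + cardU_tot = n using cAD at n+1 and cUD_total
  have c1 : (IccZ n).filter (fun y => y ≤ z y)
      = (IccZ n).filter (fun y => y < (n:ℤ)+1 ∧ y ≤ z y) := by
    apply Finset.filter_congr
    intro y hy
    simp only [IccZ, Finset.mem_Icc] at hy
    constructor
    · intro h; exact ⟨by omega, h⟩
    · intro h; exact h.2
  have c2 : (IccZ n).filter (fun y => z y < y)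
      = (IccZ n).filter (fun y => y < (n:ℤ)+1 ∧ z y < y) := by
    apply Finset.filter_congr
    intro y hy
    simp only [IccZ, Finset.mem_Icc] at hy
    constructor
    · intro h; exact ⟨by omega, h⟩
    · intro h; exact h.2
  have hcad := cAD (n := n) (z := z) hn (x := (n:ℤ)+1) (by omega) (by omega)
  have hud := cUD_total hn hz hzi
  rw [c1] at e1 ⊢
  rw [c2] at hud
  omega

-- ## values of the Grassmannian permutation

theorem Bl_Sf (hn : 0 < n) {x : ℤ} (h1 : 1 ≤ x) (h2 : x ≤ (n:ℤ)+1) :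
    (Bl n z x : ℤ) = x - 1 + Sf n z x := by
  have hb := Bl_card (n := n) (z := z) x
  have hcad := cAD (n := n) (z := z) hn h1 h2
  unfold Sf
  omega

theorem sf_step {k : ℤ} (hk1 : 1 ≤ k) (hk2 : k ≤ (n:ℤ)) :
    Sf n z (k+1)
      = Sf n z k + (if k < z k then 1 else 0) - (if z k < k then 1 else 0) := by
  have hU := card_filter_step (n := n) (fun y => y < z y) k
  have hD := card_filter_step (n := n) (fun y => z y < y) k
  have e1 : (1 ≤ k ∧ k ≤ (n:ℤ) ∧ k < z k) ↔ k < z k :=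
    ⟨fun h => h.2.2, fun h => ⟨hk1, hk2, h⟩⟩
  have e2 : (1 ≤ k ∧ k ≤ (n:ℤ) ∧ z k < k) ↔ z k < k :=
    ⟨fun h => h.2.2, fun h => ⟨hk1, hk2, h⟩⟩
  rw [if_congr e1 rfl rfl] at hU
  rw [if_congr e2 rfl rfl] at hD
  unfold Sf
  split_ifs at hU hD ⊢ <;> omega

theorem aval (hn : 0 < n) (hz : ∀ i : ℤ, z (i + n) = z i + n) (hzi : z⁻¹ = z)
    {ap : Equiv.Perm ℤ} (haff : ∀ i : ℤ, ap (i + (n:ℕ)) = ap i + (n:ℕ))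
    (hwa : ∀ p : ℕ, p < n → ap ((LWin n z).getD p 0) = (p:ℤ) + 1)
    {k : ℤ} (hk1 : 1 ≤ k) (hk2 : k ≤ (n:ℤ)) :
    ap k = if z k < k then Sf n z (om n z k) + z k
           else Sf n z k + k + (if z k = k then 0 else 1) := by
  have hlen := len_LWin (n := n) (z := z) hn hz hzi
  rcases lt_trichotomy (z k) k with hD | hF | hU
  · -- descent type
    rw [if_pos hD]
    have hub := om_mem (z := z) (n := n) hn k
    have hUU : om n z k < z (om n z k) := om_DU hz hzi hD
    obtain ⟨c, hc1, hc2⟩ := om_ex hz hzi k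
    set u := om n z k with hu
    have humem : u ∈ AsortL n z := mem_AsortL.2 ⟨⟨hub.1, hub.2⟩, le_of_lt hUU⟩
    obtain ⟨hget, hbound⟩ := getD_LWin humem
    have hblkL : blkL z u = [z u, u] := by unfold blkL; rw [if_neg (by omega)]
    have hlen2 : (blkL z u).length = 2 := by rw [hblkL]; rfl
    have h0 := hget 0 (by omega)
    rw [hblkL] at h0
    simp only [Nat.add_zero, List.getD_cons_zero] at h0
    have hwa0 := hwa (Bl n z u) (by omega)
    rw [h0] at hwa0
    have htr := shift haff c (z u)
    have hk' : k = z u + c * n := by omega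
    rw [← hk'] at htr
    have hbs := Bl_Sf (n := n) (z := z) hn (x := u) (by omega) (by omega)
    omega
  · -- fixed
    rw [if_neg (by omega), if_pos hF]
    have hkmem : k ∈ AsortL n z := mem_AsortL.2 ⟨⟨hk1, hk2⟩, le_of_eq hF.symm⟩
    obtain ⟨hget, hbound⟩ := getD_LWin hkmem
    have hblkL : blkL z k = [k] := by unfold blkL; rw [if_pos hF]
    have hlen1 : (blkL z k).length = 1 := by rw [hblkL]; rfl
    have h0 := hget 0 (by omega)
    rw [hblkL] at h0
    simp only [Nat.add_zero, List.getD_cons_zero] at h0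
    have hwa0 := hwa (Bl n z k) (by omega)
    rw [h0] at hwa0
    have hbs := Bl_Sf (n := n) (z := z) hn (x := k) (by omega) (by omega)
    omega
  · -- up type
    rw [if_neg (by omega), if_neg (by omega)]
    have hkmem : k ∈ AsortL n z := mem_AsortL.2 ⟨⟨hk1, hk2⟩, le_of_lt hU⟩
    obtain ⟨hget, hbound⟩ := getD_LWin hkmem
    have hblkL : blkL z k = [z k, k] := by unfold blkL; rw [if_neg (by omega)]
    have hlen2 : (blkL z k).length = 2 := by rw [hblkL]; rfl
    have h1 := hget 1 (by omega)
    rw [hblkL] at h1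
    simp only [List.getD_cons_succ, List.getD_cons_zero] at h1
    have hwa1 := hwa (Bl n z k + 1) (by omega)
    rw [h1] at hwa1
    have hbs := Bl_Sf (n := n) (z := z) hn (x := k) (by omega) (by omega)
    push_cast at hwa1
    omega

theorem pointwise (hn : 0 < n) (hz : ∀ i : ℤ, z (i + n) = z i + n) (hzi : z⁻¹ = z)
    {ap : Equiv.Perm ℤ} (haff : ∀ i : ℤ, ap (i + (n:ℕ)) = ap i + (n:ℕ))
    (hwa : ∀ p : ℕ, p < n → ap ((LWin n z).getD p 0) = (p:ℤ) + 1)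
    {k : ℤ} (hk1 : 1 ≤ k) (hk2 : k < (n:ℤ)) :
    (ap k < ap (k+1)) ↔ ¬ (z (k+1) < z k ∧ z (k+1) ≤ k) := by
  have hv1 := aval hn hz hzi haff hwa hk1 (by omega)
  have hv2 := aval hn hz hzi haff hwa (k := k+1) (by omega) (by omega)
  have hstep := sf_step (n := n) (z := z) (k := k) hk1 (by omega)
  rcases lt_trichotomy (z (k+1)) (k+1) with hD2 | hF2 | hU2
  · -- k+1 is a descent
    rw [if_pos hD2] at hv2
    have hL2 := L2 hn hz hzi (d := k+1) (by omega) (by omega) hD2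
    rcases lt_trichotomy (z k) k with hD1 | hF1 | hU1
    · rw [if_pos hD1] at hv1
      rcases lt_trichotomy (z (k+1)) (z k) with hlt | heq | hgt
      · have hLa := L1 hn hz hzi (d := k+1) (e := k) (by omega) (by omega) hk1
          (by omega) hD2 hD1 hlt
        omega
      · exfalso
        have := z.injective heq
        omega
      · have hLa := L1 hn hz hzi (d := k) (e := k+1) hk1 (by omega) (by omega)
          (by omega) hD1 hD2 hgt
        omega
    · rw [if_neg (by omega), if_pos hF1] at hv1
      rw [if_neg (by omega), if_neg (by omega)] at hstep
      have hne : z (k+1) ≠ z k := fun h => by have := z.injective h; omega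
      omega
    · rw [if_neg (by omega), if_neg (by omega)] at hv1
      rw [if_pos hU1, if_neg (by omega)] at hstep
      omega
  · -- k+1 fixed
    rw [if_neg (by omega), if_pos hF2] at hv2
    rcases lt_trichotomy (z k) k with hD1 | hF1 | hU1
    · rw [if_pos hD1] at hv1
      rw [if_neg (by omega), if_pos hD1] at hstep
      have hL2 := L2 hn hz hzi (d := k) hk1 (by omega) hD1
      omega
    · rw [if_neg (by omega), if_pos hF1] at hv1
      rw [if_neg (by omega), if_neg (by omega)] at hstep
      omega
    · rw [if_neg (by omega), if_neg (by omega)] at hv1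
      rw [if_pos hU1, if_neg (by omega)] at hstep
      omega
  · -- k+1 up
    rw [if_neg (by omega), if_neg (by omega)] at hv2
    rcases lt_trichotomy (z k) k with hD1 | hF1 | hU1
    · rw [if_pos hD1] at hv1
      rw [if_neg (by omega), if_pos hD1] at hstep
      have hL2 := L2 hn hz hzi (d := k) hk1 (by omega) hD1
      omega
    · rw [if_neg (by omega), if_pos hF1] at hv1
      rw [if_neg (by omega), if_neg (by omega)] at hstep
      omega
    · rw [if_neg (by omega), if_neg (by omega)] at hv1
      rw [if_pos hU1, if_neg (by omega)] at hstep
      omega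

end Part2

end GrassAux

/-- for an affine involution `z`, the following are equivalent:
(a) every visible descent of `z` is `≡ 0 ≡ n (mod n)`;
(b) the involution code of `z` is weakly increasing;
(c) `α_min(z)⁻¹` is Grassmannian. -/
theorem grassmannian_characterization (n : ℕ) (hn : 0 < n)
    (z : Equiv.Perm ℤ) (hz : IsAffine n z) (hzi : z⁻¹ = z)
    (a : Equiv.Perm ℤ) (ha : IsAffine n a)
    (hwin : ∀ k : ℕ, k < n → a⁻¹ ((k : ℤ) + 1) = (aminWindow n z).getD k 0) :
    ((∀ i : ℤ, z (i + 1) < z i → z (i + 1) ≤ i → i % (n : ℤ) = 0) ↔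
      (∀ i j : ℤ, 1 ≤ i → i ≤ j → j ≤ n → icodeEntry z i ≤ icodeEntry z j)) ∧
    ((∀ i j : ℤ, 1 ≤ i → i ≤ j → j ≤ n → icodeEntry z i ≤ icodeEntry z j) ↔
      (∀ k : ℤ, 1 ≤ k → k < n → a k < a (k + 1))) := by
  have hz1 := hz.1
  have ha1 := ha.1
  have hwa : ∀ p : ℕ, p < n → a ((GrassAux.LWin n z).getD p 0) = (p:ℤ) + 1 := by
    intro p hp
    have h1 := hwin p hp
    rw [GrassAux.window_eq hn hz1 hzi] at h1
    rw [← h1]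
    exact Equiv.apply_symm_apply a _
  have hdc : (∀ k : ℤ, 1 ≤ k → k < (n:ℤ) → ¬ GrassAux.VD z k)
      ↔ (∀ k : ℤ, 1 ≤ k → k < (n:ℤ) → a k < a (k+1)) := by
    constructor
    · intro h k h1 h2
      exact (GrassAux.pointwise hn hz1 hzi ha1 hwa h1 h2).2 (h k h1 h2)
    · intro h k h1 h2
      exact (GrassAux.pointwise hn hz1 hzi ha1 hwa h1 h2).1 (h k h1 h2)
  refine ⟨(GrassAux.part_ad hn hz1).trans (GrassAux.part_db hn hz1), ?_⟩
  exact (GrassAux.part_db hn hz1).symm.trans hdc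
end
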